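/- arXiv:1803.00454 — 8 statements merged into one kernel-verified Lean document; each statement's English description precedes it below -/
import Mathlib

section
/- Let a ∈ (0,1), let c₂ ≥ 2√(1−a) and let c₁ > c₂ with c₁ ≥ f(c₂). Then Λ(c₂,c₁) > 0 and (Λ(c₂,c₁)² + 1)/Λ(c₂,c₁) < c₁. -/
open Real

/-- For `c₂ ≥ 2√(1-a)`, `c₁ > c₂` with `c₁ ≥ f(c₂)`, the decay rate
`Λ(c₂,c₁)` is positive and `(Λ² + 1)/Λ < c₁`. -/
theorem Lambda_speed_bound
    (a c₁ c₂ lam Lam : ℝ) (ha0 : 0 < a) (ha1 : a < 1)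
    (hc₂ : 2 * Real.sqrt (1 - a) ≤ c₂) (hlt : c₂ < c₁)
    (hf : c₂ - Real.sqrt (c₂ ^ 2 - 4 * (1 - a)) + 2 * Real.sqrt a ≤ c₁)
    (hlam : lam = (c₂ - Real.sqrt (c₂ ^ 2 - 4 * (1 - a))) / 2)
    (hLam : Lam = (c₁ - Real.sqrt (c₁ ^ 2 - 4 * (lam * (c₁ - c₂) + 1))) / 2) :
    0 < Lam ∧ (Lam ^ 2 + 1) / Lam < c₁ := by
  have h1a : 0 < 1 - a := by linarith
  have hsq1a : Real.sqrt (1 - a) > 0 := Real.sqrt_pos.2 h1a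
  have hc₂pos : 0 < c₂ := by linarith
  set s := Real.sqrt (c₂ ^ 2 - 4 * (1 - a)) with hs
  have hargnn : 0 ≤ c₂ ^ 2 - 4 * (1 - a) := by
    have h := Real.sq_sqrt h1a.le
    nlinarith [hsq1a]
  have hs2 : s ^ 2 = c₂ ^ 2 - 4 * (1 - a) := Real.sq_sqrt hargnn
  have hsnn : 0 ≤ s := Real.sqrt_nonneg _
  have hslt : s < c₂ := by nlinarith
  have hlampos : 0 < lam := by rw [hlam]; linarith
  have hprod : lam * (c₂ - lam) = 1 - a := by rw [hlam]; nlinarith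
  have hsa : Real.sqrt a > 0 := Real.sqrt_pos.2 ha0
  have hsa2 : Real.sqrt a ^ 2 = a := Real.sq_sqrt ha0.le
  have hf' : 2 * lam + 2 * Real.sqrt a ≤ c₁ := by rw [hlam]; linarith
  have hdisc : 0 ≤ c₁ ^ 2 - 4 * (lam * (c₁ - c₂) + 1) := by
    nlinarith [sq_nonneg (c₁ - 2 * lam - 2 * Real.sqrt a)]
  set r := Real.sqrt (c₁ ^ 2 - 4 * (lam * (c₁ - c₂) + 1)) with hr
  have hr2 : r ^ 2 = c₁ ^ 2 - 4 * (lam * (c₁ - c₂) + 1) := Real.sq_sqrt hdisc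
  have hrnn : 0 ≤ r := Real.sqrt_nonneg _
  have hc₁pos : 0 < c₁ := by nlinarith
  have hDpos : 0 < lam * (c₁ - c₂) + 1 := by nlinarith
  have hrlt : r < c₁ := by nlinarith
  have hLampos : 0 < Lam := by rw [hLam]; linarith
  have hroot : Lam ^ 2 - c₁ * Lam + (lam * (c₁ - c₂) + 1) = 0 := by
    rw [hLam]; linear_combination hr2 / 4
  refine ⟨hLampos, ?_⟩
  rw [div_lt_iff₀ hLampos]
  have hpos : 0 < lam * (c₁ - c₂) := mul_pos hlampos (by linarith)
  linarith
end

section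
/- Let a ∈ (0,1), c ≥ 2√(1−a) and c̃ ≥ max(c, f(c)). Then the discriminant c̃² − 4(λ(c)(c̃ − c) + 1) is nonnegative, one has 0 < Λ(c,c̃) ≤ c̃/2, and Λ(c,c̃) satisfies the quadratic relation Λ(c,c̃)² − c̃·Λ(c,c̃) + λ(c)(c̃ − c) + 1 = 0. -/
open Real

/-- For `c ≥ 2√(1-a)` and `c̃ ≥ max(c, f(c))`, the discriminant
`c̃² - 4(λ(c)(c̃-c)+1)` is nonnegative, `0 < Λ(c,c̃) ≤ c̃/2`, and `Λ(c,c̃)` solves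
`Λ² - c̃Λ + λ(c)(c̃-c) + 1 = 0`. -/
theorem Lambda_quadratic
    (a c ct lam Lam : ℝ) (ha0 : 0 < a) (ha1 : a < 1)
    (hc : 2 * Real.sqrt (1 - a) ≤ c)
    (hct : max c (c - Real.sqrt (c ^ 2 - 4 * (1 - a)) + 2 * Real.sqrt a) ≤ ct)
    (hlam : lam = (c - Real.sqrt (c ^ 2 - 4 * (1 - a))) / 2)
    (hLam : Lam = (ct - Real.sqrt (ct ^ 2 - 4 * (lam * (ct - c) + 1))) / 2) :
    0 ≤ ct ^ 2 - 4 * (lam * (ct - c) + 1) ∧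
    0 < Lam ∧ Lam ≤ ct / 2 ∧
    Lam ^ 2 - ct * Lam + (lam * (ct - c) + 1) = 0 := by
  have ha1' : (0:ℝ) ≤ 1 - a := by linarith
  have hsa : Real.sqrt (1 - a) ^ 2 = 1 - a := Real.sq_sqrt ha1'
  have hs1nn : 0 ≤ Real.sqrt (1 - a) := Real.sqrt_nonneg _
  have hs1pos : 0 < Real.sqrt (1 - a) := Real.sqrt_pos.mpr (by linarith)
  have hcpos : 0 < c := by linarith
  have hdisc1 : 0 ≤ c ^ 2 - 4 * (1 - a) := by nlinarith
  set s := Real.sqrt (c ^ 2 - 4 * (1 - a)) with hs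
  have hs2 : s ^ 2 = c ^ 2 - 4 * (1 - a) := Real.sq_sqrt hdisc1
  have hsnn : 0 ≤ s := Real.sqrt_nonneg _
  have hslt : s < c := by nlinarith
  have hlampos : 0 < lam := by rw [hlam]; linarith
  have hq : lam ^ 2 - c * lam + (1 - a) = 0 := by
    rw [hlam]; field_simp; nlinarith
  have hctc : c ≤ ct := le_trans (le_max_left _ _) hct
  have hctf : 2 * lam + 2 * Real.sqrt a ≤ ct := by
    have := le_trans (le_max_right _ _) hct
    rw [hlam]; linarith
  have hqa : Real.sqrt a ^ 2 = a := Real.sq_sqrt ha0.le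
  have hqann : 0 ≤ Real.sqrt a := Real.sqrt_nonneg _
  have hqapos : 0 < Real.sqrt a := Real.sqrt_pos.mpr ha0
  have hDeq : ct ^ 2 - 4 * (lam * (ct - c) + 1) = (ct - 2 * lam) ^ 2 - 4 * a := by
    linear_combination -4 * hq
  have hD : 0 ≤ ct ^ 2 - 4 * (lam * (ct - c) + 1) := by
    rw [hDeq]; nlinarith
  have hD2 : Real.sqrt (ct ^ 2 - 4 * (lam * (ct - c) + 1)) ^ 2
      = ct ^ 2 - 4 * (lam * (ct - c) + 1) := Real.sq_sqrt hD
  set r := Real.sqrt (ct ^ 2 - 4 * (lam * (ct - c) + 1)) with hr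
  have hrnn : 0 ≤ r := Real.sqrt_nonneg _
  have hctpos : 0 < ct := lt_of_lt_of_le hcpos hctc
  have hrlt : r < ct := by nlinarith
  refine ⟨hD, ?_, ?_, ?_⟩
  · rw [hLam]; linarith
  · rw [hLam]; linarith
  · rw [hLam]; linear_combination (1/4 : ℝ) * hD2
end

section
/- Let a ∈ (0,1), c ≥ 2√(1−a), and c̃ ≥ c with c̃ > f(c). Let η ∈ (0, min(Λ(c,c̃), √(c̃² − 4(λ(c)(c̃ − c) + 1)))) and A > 0. Set K = max(1, (1 + aA)/(η(c̃ − η − 2Λ(c,c̃)))), x_w = (ln K)/η, and W(t,x) = exp(−λ(c)(c̃ − c)t) · (exp(−Λ(c,c̃)(x − c̃t + x_w)) − K·exp(−(Λ(c,c̃) + η)(x − c̃t + x_w))). Then for every (t,x) with t ≥ 0 and x > c̃t one has W(t,x) > 0, and for every σ ≥ η and every such (t,x): ∂_t W(t,x) − ∂_xx W(t,x) ≤ W(t,x)·(1 − W(t,x) − aA·exp(−σ(x − c̃t + x_w))). -/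
open Real

lemma hasDerivAt_exp_affine (p q t : ℝ) :
    HasDerivAt (fun s => Real.exp (p * s + q)) (p * Real.exp (p * t + q)) t := by
  have h : HasDerivAt (fun s : ℝ => p * s + q) p t := by
    simpa using ((hasDerivAt_id t).const_mul p).add_const q
  simpa [mul_comm] using h.exp

set_option maxHeartbeats 1000000 in
/-- The sub-solution `W(t,x) = e^{-λ(c)(c̃-c)t}(e^{-Λ(x-c̃t+x_w)} - K e^{-(Λ+η)(x-c̃t+x_w)})`
is positive for `x > c̃t`, `t ≥ 0`, and satisfies there, for every `σ ≥ η`,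
`∂ₜW - ∂ₓₓW ≤ W(1 - W - aA e^{-σ(x-c̃t+x_w)})`. -/
theorem w_sub_solution
    (a c ct η A lam Lam K xw : ℝ) (ha0 : 0 < a) (ha1 : a < 1)
    (hc : 2 * Real.sqrt (1 - a) ≤ c) (hct1 : c ≤ ct)
    (hct2 : c - Real.sqrt (c ^ 2 - 4 * (1 - a)) + 2 * Real.sqrt a < ct)
    (hlam : lam = (c - Real.sqrt (c ^ 2 - 4 * (1 - a))) / 2)
    (hLam : Lam = (ct - Real.sqrt (ct ^ 2 - 4 * (lam * (ct - c) + 1))) / 2)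
    (hη0 : 0 < η)
    (hη1 : η < min Lam (Real.sqrt (ct ^ 2 - 4 * (lam * (ct - c) + 1))))
    (hA : 0 < A)
    (hK : K = max 1 ((1 + a * A) / (η * (ct - η - 2 * Lam))))
    (hxw : xw = Real.log K / η)
    (W : ℝ → ℝ → ℝ)
    (hW : ∀ t x, W t x = Real.exp (-(lam * (ct - c)) * t)
      * (Real.exp (-Lam * (x - ct * t + xw)) - K * Real.exp (-(Lam + η) * (x - ct * t + xw)))) :
    (∀ t x : ℝ, 0 ≤ t → ct * t < x → 0 < W t x) ∧
    (∀ σ, η ≤ σ → ∀ t x : ℝ, 0 ≤ t → ct * t < x →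
      deriv (fun s => W s x) t - deriv (deriv (fun y => W t y)) x ≤
        W t x * (1 - W t x - a * A * Real.exp (-σ * (x - ct * t + xw)))) := by
  -- basic facts
  have h1a : (0:ℝ) < 1 - a := by linarith
  have hc0 : 0 < c := lt_of_lt_of_le (by positivity) hc
  have hsq : Real.sqrt (1 - a) ^ 2 = 1 - a := Real.sq_sqrt h1a.le
  have hdisc1 : 0 ≤ c ^ 2 - 4 * (1 - a) := by nlinarith [Real.sqrt_nonneg (1 - a)]
  have hsd_le : Real.sqrt (c ^ 2 - 4 * (1 - a)) ≤ c := by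
    have h := Real.sqrt_le_sqrt (show c ^ 2 - 4 * (1 - a) ≤ c ^ 2 by nlinarith)
    rwa [Real.sqrt_sq hc0.le] at h
  have hlam0 : 0 ≤ lam := by rw [hlam]; linarith
  have hμ0 : 0 ≤ lam * (ct - c) := mul_nonneg hlam0 (by linarith)
  have hηΛ : η < Lam := lt_of_lt_of_le hη1 (min_le_left _ _)
  have hηD : η < Real.sqrt (ct ^ 2 - 4 * (lam * (ct - c) + 1)) :=
    lt_of_lt_of_le hη1 (min_le_right _ _)
  have hΛpos : 0 < Lam := hη0.trans hηΛ
  have hDpos : 0 < Real.sqrt (ct ^ 2 - 4 * (lam * (ct - c) + 1)) := hη0.trans hηD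
  have hdisc2 : 0 < ct ^ 2 - 4 * (lam * (ct - c) + 1) := Real.sqrt_pos.mp hDpos
  have hD2 : Real.sqrt (ct ^ 2 - 4 * (lam * (ct - c) + 1)) ^ 2
      = ct ^ 2 - 4 * (lam * (ct - c) + 1) := Real.sq_sqrt hdisc2.le
  have hkey : Lam ^ 2 - ct * Lam + (lam * (ct - c) + 1) = 0 := by
    rw [hLam]; nlinarith [hD2]
  have hct2Λ : ct - 2 * Lam = Real.sqrt (ct ^ 2 - 4 * (lam * (ct - c) + 1)) := by
    rw [hLam]; ring
  have hden : 0 < η * (ct - η - 2 * Lam) := mul_pos hη0 (by linarith [hct2Λ, hηD])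
  have hK1 : 1 ≤ K := hK ▸ le_max_left _ _
  have hK0 : 0 < K := lt_of_lt_of_le one_pos hK1
  have hKineq : 1 + a * A ≤ η * (ct - η - 2 * Lam) * K := by
    have h2 : (1 + a * A) / (η * (ct - η - 2 * Lam)) ≤ K := hK ▸ le_max_right _ _
    rw [div_le_iff₀ hden] at h2
    linarith [h2]
  have hxw0 : 0 ≤ xw := by
    rw [hxw]; exact div_nonneg (Real.log_nonneg hK1) hη0.le
  have hexw : Real.exp (η * xw) = K := by
    rw [hxw, mul_div_cancel₀ _ (ne_of_gt hη0)]
    exact Real.exp_log hK0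
  -- positivity
  have hpos : ∀ t x : ℝ, 0 ≤ t → ct * t < x → 0 < W t x := by
    intro t x ht hx
    rw [hW]
    have hz : xw < x - ct * t + xw := by linarith
    have hlt : K * Real.exp (-(Lam + η) * (x - ct * t + xw))
        < Real.exp (-Lam * (x - ct * t + xw)) := by
      rw [← hexw, ← Real.exp_add]
      apply Real.exp_lt_exp.mpr
      linarith [mul_lt_mul_of_pos_left hz hη0]
    exact mul_pos (Real.exp_pos _) (by linarith [hlt])
  refine ⟨hpos, ?_⟩
  intro σ hσ t x ht hx
  set p1 : ℝ := Lam * ct - lam * (ct - c) with hp1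
  set p2 : ℝ := (Lam + η) * ct - lam * (ct - c) with hp2
  set q1 : ℝ := -(Lam * (x + xw)) with hq1
  set q2 : ℝ := -((Lam + η) * (x + xw)) with hq2
  set r1 : ℝ := p1 * t - Lam * xw with hr1
  set r2 : ℝ := p2 * t - (Lam + η) * xw with hr2
  -- time derivative
  have hfun_t : (fun s => W s x)
      = fun s => Real.exp (p1 * s + q1) - K * Real.exp (p2 * s + q2) := by
    funext s
    rw [hW s x, mul_sub, ← Real.exp_add, mul_left_comm, ← Real.exp_add]
    have e1 : -(lam * (ct - c)) * s + -Lam * (x - ct * s + xw) = p1 * s + q1 := by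
      rw [hp1, hq1]; ring
    have e2 : -(lam * (ct - c)) * s + -(Lam + η) * (x - ct * s + xw) = p2 * s + q2 := by
      rw [hp2, hq2]; ring
    rw [e1, e2]
  have hdt : deriv (fun s => W s x) t
      = p1 * Real.exp (p1 * t + q1) - K * (p2 * Real.exp (p2 * t + q2)) := by
    rw [hfun_t]
    exact ((hasDerivAt_exp_affine p1 q1 t).sub
      ((hasDerivAt_exp_affine p2 q2 t).const_mul K)).deriv
  -- space derivatives
  have hfun_x : (fun y => W t y)
      = fun y => Real.exp ((-Lam) * y + r1) - K * Real.exp ((-(Lam + η)) * y + r2) := by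
    funext y
    rw [hW t y, mul_sub, ← Real.exp_add, mul_left_comm, ← Real.exp_add]
    have e1 : -(lam * (ct - c)) * t + -Lam * (y - ct * t + xw) = (-Lam) * y + r1 := by
      rw [hr1, hp1]; ring
    have e2 : -(lam * (ct - c)) * t + -(Lam + η) * (y - ct * t + xw)
        = (-(Lam + η)) * y + r2 := by
      rw [hr2, hp2]; ring
    rw [e1, e2]
  have hdx1 : deriv (fun y => W t y)
      = fun y => (-Lam) * Real.exp ((-Lam) * y + r1)
        - K * ((-(Lam + η)) * Real.exp ((-(Lam + η)) * y + r2)) := by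
    funext y
    rw [hfun_x]
    exact ((hasDerivAt_exp_affine (-Lam) r1 y).sub
      ((hasDerivAt_exp_affine (-(Lam + η)) r2 y).const_mul K)).deriv
  have hdx2 : deriv (deriv (fun y => W t y)) x
      = (-Lam) * ((-Lam) * Real.exp ((-Lam) * x + r1))
        - K * ((-(Lam + η)) * ((-(Lam + η)) * Real.exp ((-(Lam + η)) * x + r2))) := by
    rw [hdx1]
    exact (((hasDerivAt_exp_affine (-Lam) r1 x).const_mul (-Lam)).sub
      (((hasDerivAt_exp_affine (-(Lam + η)) r2 x).const_mul (-(Lam + η))).const_mul K)).deriv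
  have ex1 : Real.exp ((-Lam) * x + r1) = Real.exp (p1 * t + q1) := by
    congr 1; rw [hr1, hq1]; ring
  have ex2 : Real.exp ((-(Lam + η)) * x + r2) = Real.exp (p2 * t + q2) := by
    congr 1; rw [hr2, hq2]; ring
  have hWE : W t x = Real.exp (p1 * t + q1) - K * Real.exp (p2 * t + q2) := by
    simpa using congrFun hfun_t t
  have hz0 : 0 < x - ct * t + xw := by linarith
  have hE2pos : 0 < Real.exp (p2 * t + q2) := Real.exp_pos _
  have hE1pos : 0 < Real.exp (p1 * t + q1) := Real.exp_pos _
  have hEprod : Real.exp (p1 * t + q1) * Real.exp (-η * (x - ct * t + xw))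
      = Real.exp (p2 * t + q2) := by
    rw [← Real.exp_add]; congr 1; rw [hp1, hq1, hp2, hq2]; ring
  have hσle : Real.exp (-σ * (x - ct * t + xw)) ≤ Real.exp (-η * (x - ct * t + xw)) := by
    apply Real.exp_le_exp.mpr
    linarith [mul_nonneg (sub_nonneg.mpr hσ) hz0.le]
  have hE1η : Real.exp (p1 * t + q1) ≤ Real.exp (-η * (x - ct * t + xw)) := by
    apply Real.exp_le_exp.mpr
    rw [hp1, hq1]
    linarith [mul_nonneg hμ0 ht, mul_nonneg (sub_nonneg.mpr hηΛ.le) hz0.le]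
  have hWpos : 0 < Real.exp (p1 * t + q1) - K * Real.exp (p2 * t + q2) :=
    hWE ▸ hpos t x ht hx
  have hchain : (Real.exp (p1 * t + q1) - K * Real.exp (p2 * t + q2))
      * ((Real.exp (p1 * t + q1) - K * Real.exp (p2 * t + q2))
        + a * A * Real.exp (-σ * (x - ct * t + xw)))
      ≤ η * (ct - η - 2 * Lam) * K * Real.exp (p2 * t + q2) := by
    have hWleE1 : Real.exp (p1 * t + q1) - K * Real.exp (p2 * t + q2)
        ≤ Real.exp (p1 * t + q1) := by linarith [mul_pos hK0 hE2pos]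
    have h2 : (Real.exp (p1 * t + q1) - K * Real.exp (p2 * t + q2))
        + a * A * Real.exp (-σ * (x - ct * t + xw))
        ≤ (1 + a * A) * Real.exp (-η * (x - ct * t + xw)) := by
      have haA : a * A * Real.exp (-σ * (x - ct * t + xw))
          ≤ a * A * Real.exp (-η * (x - ct * t + xw)) :=
        mul_le_mul_of_nonneg_left hσle (by positivity)
      linarith [hE1η, haA, hWleE1]
    calc (Real.exp (p1 * t + q1) - K * Real.exp (p2 * t + q2))
        * ((Real.exp (p1 * t + q1) - K * Real.exp (p2 * t + q2))
          + a * A * Real.exp (-σ * (x - ct * t + xw)))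
        ≤ Real.exp (p1 * t + q1) * ((1 + a * A) * Real.exp (-η * (x - ct * t + xw))) := by
          apply mul_le_mul hWleE1 h2 _ hE1pos.le
          positivity
      _ = (1 + a * A) * Real.exp (p2 * t + q2) := by rw [← hEprod]; ring
      _ ≤ η * (ct - η - 2 * Lam) * K * Real.exp (p2 * t + q2) := by
          linarith [mul_nonneg (sub_nonneg.mpr hKineq) hE2pos.le]
  have c1 : p1 = 1 + Lam ^ 2 := by rw [hp1]; linarith [hkey]
  have c2 : p2 = 1 + η * (ct - η - 2 * Lam) + (Lam + η) ^ 2 := by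
    rw [hp2]; linarith [hkey]
  rw [hdt, hdx2, hWE, ex1, ex2]
  set E1 := Real.exp (p1 * t + q1) with hE1def
  set E2 := Real.exp (p2 * t + q2) with hE2def
  rw [c1, c2]
  linarith [hchain]
end

section
/- Let d > 0, r > 0, b > 1, c > 2√(rd), and set λ_v = (c − √(c² − 4rd))/(2d). Let η ∈ (0, min(λ_v, √(c² − 4rd)/d)) and B > 0. Set K = r(1 + bB)/(η(√(c² − 4rd) − dη)), ξ_β = (ln K)/η, and β(ξ) = exp(−λ_v(ξ + ξ_β)) − K·exp(−(λ_v + η)(ξ + ξ_β)). Then β(ξ) > 0 for all ξ > 0, and for every σ ≥ η and every ξ > 0: −d·β''(ξ) − c·β'(ξ) ≤ r·β(ξ)·(1 − β(ξ) − bB·exp(−σ(ξ + ξ_β))). -/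
/-!
Write `x = ξ + ξ_β`, `Δ = √(c² - 4rd)` and `L u = -d u'' - c u'`. On `e^{-μx}` the operator `L` acts
as multiplication by `cμ - dμ²`, which equals `r` at the root `μ = λ_v` and `r + η(Δ - dη)` at
`μ = λ_v + η`; by the choice of `K`, `Lβ = r e^{-λ_v x} - (rK + r(1 + bB)) e^{-(λ_v+η)x}`.
The claim then reduces to `β² + bBβe^{-σx} ≤ (1 + bB) e^{-(λ_v+η)x}`, which holds because
`0 < β ≤ e^{-λ_v x}` and `η ≤ λ_v, σ` with `x > 0`. Positivity of `β` is `K e^{-ηx} < 1`, i.e.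
`x > ξ_β`; and `ξ_β > 0` since `K > 1`, as `η(Δ - dη) < λ_v Δ = r - dλ_v² < r`.
-/

open Real

lemma sq_sub_four_mul_pos_of_two_sqrt_lt {r d c : ℝ} (hrd : 0 ≤ r * d)
    (hc : 2 * √(r * d) < c) : 0 < c ^ 2 - 4 * r * d := by
  nlinarith [sq_sqrt hrd, sqrt_nonneg (r * d)]

section QuadraticRoot

variable {r d c Δ : ℝ}

lemma mul_root_sub_mul_sq_root (hd : d ≠ 0) (hΔ : Δ ^ 2 = c ^ 2 - 4 * r * d) :
    c * ((c - Δ) / (2 * d)) - d * ((c - Δ) / (2 * d)) ^ 2 = r := by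
  field_simp
  linear_combination -hΔ

lemma sub_two_mul_mul_root (hd : d ≠ 0) : c - 2 * d * ((c - Δ) / (2 * d)) = Δ := by
  field_simp
  ring

end QuadraticRoot

lemma mul_sub_mul_lt_of_lt_root {r d c Δ lam η q : ℝ} (hd : 0 < d) (hr : 0 ≤ r) (hq : 0 ≤ q)
    (hroot : c * lam - d * lam ^ 2 = r) (hΔ : c - 2 * d * lam = Δ)
    (hη : 0 < η) (hηlam : η < lam) (hηΔ : d * η < Δ) :
    η * (Δ - d * η) < r * (1 + q) := by
  have hlamΔ : lam * Δ = r - d * lam ^ 2 := by linear_combination lam * hΔ.symm + hroot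
  have hlam : 0 < lam := hη.trans hηlam
  nlinarith [mul_lt_mul_of_pos_right hηlam (sub_pos.2 hηΔ), mul_pos hlam (mul_pos hd hη),
    mul_pos hd (pow_pos hlam 2), mul_nonneg hr hq]

lemma hasDerivAt_exp_neg_mul_add (μ s x : ℝ) :
    HasDerivAt (fun y => exp (-μ * (y + s))) (-μ * exp (-μ * (x + s))) x := by
  have h : HasDerivAt (fun y => -μ * (y + s)) (-μ) x := by
    simpa using ((hasDerivAt_id x).add_const s).const_mul (-μ)
  simpa [mul_comm] using h.exp

lemma deriv_two_exp (A μ B ν s : ℝ) :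
    deriv (fun x => A * exp (-μ * (x + s)) + B * exp (-ν * (x + s))) =
      fun x => -μ * A * exp (-μ * (x + s)) + -ν * B * exp (-ν * (x + s)) := by
  funext x
  refine (((hasDerivAt_exp_neg_mul_add μ s x).const_mul A).add
    ((hasDerivAt_exp_neg_mul_add ν s x).const_mul B)).deriv.trans ?_
  ring

lemma wave_operator_two_exp (d c A μ B ν s x : ℝ) :
    -d * deriv (deriv fun x => A * exp (-μ * (x + s)) + B * exp (-ν * (x + s))) x
        - c * deriv (fun x => A * exp (-μ * (x + s)) + B * exp (-ν * (x + s))) x =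
      A * (c * μ - d * μ ^ 2) * exp (-μ * (x + s)) +
        B * (c * ν - d * ν ^ 2) * exp (-ν * (x + s)) := by
  rw [deriv_two_exp, deriv_two_exp]
  ring

lemma mul_exp_lt_exp_of_log_div_lt {K η lam x : ℝ} (hK : 0 < K) (hη : 0 < η)
    (hx : log K / η < x) : K * exp (-(lam + η) * x) < exp (-lam * x) := by
  have hKx : K < exp (η * x) := by
    rw [← exp_log hK, exp_lt_exp]
    exact (div_lt_iff₀' hη).1 hx
  calc K * exp (-(lam + η) * x) < exp (η * x) * exp (-(lam + η) * x) := by gcongr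
    _ = exp (-lam * x) := by rw [← exp_add]; ring_nf

lemma two_exp_sub_solution_le {r q lam η σ K ε x : ℝ} (hr : 0 ≤ r) (hq : 0 ≤ q) (hK : 0 ≤ K)
    (hKε : K * ε = r * (1 + q)) (hηlam : η ≤ lam) (hσ : η ≤ σ) (hx : 0 ≤ x)
    (hβ : 0 ≤ exp (-lam * x) - K * exp (-(lam + η) * x)) :
    r * exp (-lam * x) - K * (r + ε) * exp (-(lam + η) * x) ≤
      r * (exp (-lam * x) - K * exp (-(lam + η) * x)) *
        (1 - (exp (-lam * x) - K * exp (-(lam + η) * x)) - q * exp (-σ * x)) := by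
  set β := exp (-lam * x) - K * exp (-(lam + η) * x)
  have hβle : β ≤ exp (-lam * x) := by
    have := exp_pos (-(lam + η) * x)
    simp only [β]; nlinarith
  have hsq : β ^ 2 ≤ exp (-(lam + η) * x) :=
    calc β ^ 2 ≤ exp (-lam * x) ^ 2 := pow_le_pow_left₀ hβ hβle 2
      _ = exp (-(lam + lam) * x) := by rw [sq, ← exp_add]; ring_nf
      _ ≤ exp (-(lam + η) * x) := exp_le_exp.2 (by nlinarith)
  have hprod : β * exp (-σ * x) ≤ exp (-(lam + η) * x) :=
    calc β * exp (-σ * x) ≤ exp (-lam * x) * exp (-σ * x) := by gcongr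
      _ = exp (-(lam + σ) * x) := by rw [← exp_add]; ring_nf
      _ ≤ exp (-(lam + η) * x) := exp_le_exp.2 (by nlinarith)
  have hqr : 0 ≤ r * q := mul_nonneg hr hq
  nlinarith [mul_le_mul_of_nonneg_left hsq hr, mul_le_mul_of_nonneg_left hprod hqr]

/-- The sub-solution `β(ξ) = e^{-λ_v(ξ+ξ_β)} - K e^{-(λ_v+η)(ξ+ξ_β)}` is positive
on `(0,∞)` and satisfies there, for every `σ ≥ η`,
`-dβ'' - cβ' ≤ rβ(1 - β - bB e^{-σ(ξ+ξ_β)})`. -/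
theorem beta_sub_solution
    (d r b c η B lamv K ξβ : ℝ) (hd : 0 < d) (hr : 0 < r) (hb : 1 < b)
    (hc : 2 * Real.sqrt (r * d) < c)
    (hlamv : lamv = (c - Real.sqrt (c ^ 2 - 4 * r * d)) / (2 * d))
    (hη0 : 0 < η) (hη1 : η < min lamv (Real.sqrt (c ^ 2 - 4 * r * d) / d))
    (hB : 0 < B)
    (hK : K = r * (1 + b * B) / (η * (Real.sqrt (c ^ 2 - 4 * r * d) - d * η)))
    (hξβ : ξβ = Real.log K / η)
    (β : ℝ → ℝ)
    (hβ : ∀ ξ, β ξ = Real.exp (-lamv * (ξ + ξβ)) - K * Real.exp (-(lamv + η) * (ξ + ξβ))) :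
    (∀ ξ : ℝ, 0 < ξ → 0 < β ξ) ∧
    (∀ σ, η ≤ σ → ∀ ξ : ℝ, 0 < ξ →
      -d * deriv (deriv β) ξ - c * deriv β ξ ≤
        r * β ξ * (1 - β ξ - b * B * Real.exp (-σ * (ξ + ξβ)))) := by
  set Δ := √(c ^ 2 - 4 * r * d)
  have hΔsq : Δ ^ 2 = c ^ 2 - 4 * r * d :=
    sq_sqrt (sq_sub_four_mul_pos_of_two_sqrt_lt (by positivity) hc).le
  have hroot : c * lamv - d * lamv ^ 2 = r := hlamv ▸ mul_root_sub_mul_sq_root hd.ne' hΔsq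
  have hΔ : c - 2 * d * lamv = Δ := hlamv ▸ sub_two_mul_mul_root hd.ne'
  have hηlam : η < lamv := hη1.trans_le (min_le_left _ _)
  have hηΔ : d * η < Δ := (lt_div_iff₀' hd).1 (hη1.trans_le (min_le_right _ _))
  have hgap : 0 < η * (Δ - d * η) := mul_pos hη0 (sub_pos.2 hηΔ)
  have hqpos : 0 < b * B := mul_pos (by linarith) hB
  have hK1 : 1 < K := by
    rw [hK, one_lt_div hgap]
    exact mul_sub_mul_lt_of_lt_root hd hr.le hqpos.le hroot hΔ hη0 hηlam hηΔ
  have hξβ0 : 0 < ξβ := hξβ ▸ div_pos (log_pos hK1) hη0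
  have hβpos : ∀ ξ : ℝ, 0 < ξ → K * exp (-(lamv + η) * (ξ + ξβ)) < exp (-lamv * (ξ + ξβ)) :=
    fun ξ hξ => mul_exp_lt_exp_of_log_div_lt (by linarith) hη0 (by rw [← hξβ]; linarith)
  refine ⟨fun ξ hξ => (hβ ξ).symm ▸ sub_pos.2 (hβpos ξ hξ), fun σ hσ ξ hξ => ?_⟩
  have hβfun : β = fun x => 1 * exp (-lamv * (x + ξβ)) + -K * exp (-(lamv + η) * (x + ξβ)) := by
    funext x; rw [hβ]; ring
  have hrootη : c * (lamv + η) - d * (lamv + η) ^ 2 = r + η * (Δ - d * η) := by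
    linear_combination hroot + η * hΔ
  calc -d * deriv (deriv β) ξ - c * deriv β ξ
      = r * exp (-lamv * (ξ + ξβ)) -
          K * (r + η * (Δ - d * η)) * exp (-(lamv + η) * (ξ + ξβ)) := by
        rw [hβfun, wave_operator_two_exp, hroot, hrootη]; ring
    _ ≤ _ := two_exp_sub_solution_le hr.le hqpos.le (by linarith)
        (by rw [hK]; exact div_mul_cancel₀ _ hgap.ne') hηlam.le hσ (by linarith)
        (sub_nonneg.2 (hβpos ξ hξ).le)
    _ = _ := by rw [hβ]
end

section
/- Let d > 0, r > 0, δ ∈ (0,1), c > 2√(rd) and h > 0. Suppose π : ℝ → ℝ is twice differentiable, strictly decreasing, satisfies π(0) = (1−δ)/2, and solves the traveling-wave ODE −d·π''(ξ) − c·π'(ξ) = r·π(ξ)·(1 − δ − π(ξ)) for all ξ ∈ ℝ. Then the function π_h(ξ) = π(ξ) + hξ satisfies the differential inequality −d·π_h''(ξ) − c·π_h'(ξ) ≤ r·π_h(ξ)·(1 − δ − π_h(ξ)) for every ξ ∈ [−√(c/(rh)), √(c/(rh))]. -/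
/-!
Tilting only shifts `π'` by `h` and leaves `π''` unchanged, so by the traveling-wave ODE the
right side minus the left side equals `h * (c - r h ξ² + r ξ (1 - δ - 2 π ξ))`. On the interval
`r h ξ² ≤ c`, and `ξ (1 - δ - 2 π ξ) = 2 ξ (π 0 - π ξ) ≥ 0` because `π` is decreasing.
-/

open Real

lemma Antitone.sub_mul_sub_nonneg {f : ℝ → ℝ} (hf : Antitone f) (a x : ℝ) :
    0 ≤ (x - a) * (f a - f x) := by
  rcases le_total a x with hax | hxa
  · exact mul_nonneg (sub_nonneg.2 hax) (sub_nonneg.2 (hf hax))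
  · exact mul_nonneg_of_nonpos_of_nonpos (sub_nonpos.2 hxa) (sub_nonpos.2 (hf hxa))

lemma mul_sq_le_of_mem_Icc_sqrt {a c x : ℝ} (ha : 0 < a) (hc : 0 ≤ c)
    (hx₁ : -√(c / a) ≤ x) (hx₂ : x ≤ √(c / a)) : a * x ^ 2 ≤ c := by
  have hsq : x ^ 2 ≤ c / a := (Real.sq_le (div_nonneg hc ha.le)).2 ⟨hx₁, hx₂⟩
  rwa [le_div_iff₀ ha, mul_comm] at hsq

lemma deriv_add_const_mul_id {p : ℝ → ℝ} (hp : Differentiable ℝ p) (h : ℝ) :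
    deriv (fun y => p y + h * y) = fun y => deriv p y + h := by
  funext y
  rw [deriv_fun_add (hp y) (by fun_prop), deriv_const_mul _ differentiableAt_fun_id]
  simp

theorem pi_sub_solution_general
    (d r δ c h : ℝ) (hr : 0 < r)
    (hc : 2 * Real.sqrt (r * d) < c) (hh : 0 < h)
    (p : ℝ → ℝ)
    (hp1 : ∀ ξ : ℝ, DifferentiableAt ℝ p ξ)
    (hanti : StrictAnti p)
    (hp0 : p 0 = (1 - δ) / 2)
    (hode : ∀ ξ : ℝ, -d * deriv (deriv p) ξ - c * deriv p ξ = r * p ξ * (1 - δ - p ξ)) :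
    ∀ ξ : ℝ, -Real.sqrt (c / (r * h)) ≤ ξ → ξ ≤ Real.sqrt (c / (r * h)) →
      -d * deriv (deriv (fun y => p y + h * y)) ξ - c * deriv (fun y => p y + h * y) ξ ≤
        r * (p ξ + h * ξ) * (1 - δ - (p ξ + h * ξ)) := by
  intro ξ hξ₁ hξ₂
  have hc₀ : 0 ≤ c := by linarith [Real.sqrt_nonneg (r * d)]
  have hquad : r * h * ξ ^ 2 ≤ c := mul_sq_le_of_mem_Icc_sqrt (by positivity) hc₀ hξ₁ hξ₂
  have hsign : 0 ≤ (ξ - 0) * ((1 - δ) / 2 - p ξ) := hp0 ▸ hanti.antitone.sub_mul_sub_nonneg 0 ξ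
  rw [deriv_add_const_mul_id hp1, deriv_add_const]
  linear_combination hode ξ + h * hquad + 2 * r * h * hsign

/-- If `p` is a strictly decreasing traveling-wave profile of
`∂ₜv - d∂ₓₓv = rv(1-δ-v)` with speed `c > 2√(rd)` and `p(0) = (1-δ)/2`, then the
tilted function `p + hξ` is a sub-solution on `[-√(c/(rh)), √(c/(rh))]`. -/
theorem pi_sub_solution
    (d r δ c h : ℝ) (hd : 0 < d) (hr : 0 < r)
    (hδ0 : 0 < δ) (hδ1 : δ < 1)
    (hc : 2 * Real.sqrt (r * d) < c) (hh : 0 < h)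
    (p : ℝ → ℝ)
    (hp1 : ∀ ξ : ℝ, DifferentiableAt ℝ p ξ)
    (hp2 : ∀ ξ : ℝ, DifferentiableAt ℝ (deriv p) ξ)
    (hanti : StrictAnti p)
    (hp0 : p 0 = (1 - δ) / 2)
    (hode : ∀ ξ : ℝ, -d * deriv (deriv p) ξ - c * deriv p ξ = r * p ξ * (1 - δ - p ξ)) :
    ∀ ξ : ℝ, -Real.sqrt (c / (r * h)) ≤ ξ → ξ ≤ Real.sqrt (c / (r * h)) →
      -d * deriv (deriv (fun y => p y + h * y)) ξ - c * deriv (fun y => p y + h * y) ξ ≤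
        r * (p ξ + h * ξ) * (1 - δ - (p ξ + h * ξ)) :=
  pi_sub_solution_general d r δ c h hr hc hh p hp1 hanti hp0 hode
end

section
/- Let d > 0, r > 0, δ ∈ [0,1), R > 0, and set γ = 2√(r(1−δ)d) − δ. Suppose ω : [−R, R] → ℝ is twice continuously differentiable, ω ≥ 0, ω is not identically zero, ω(−R) = ω(R) = 0, and −d·ω''(x) − γ·ω'(x) = r·ω(x)·(1 − δ − ω(x)) for all x ∈ (−R, R). Then: (i) ω(x) < 1 − δ for every x ∈ [−R, R]; (ii) ω(x) > 0 for every x ∈ (−R, R); (iii) there exists a unique x* ∈ (−R, R) such that ω is strictly increasing on [−R, x*] and strictly decreasing on [x*, R] (so ω attains its maximum exactly at x*). -/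
/-!
The integrating factor `e^{γx/d}` turns the equation into
`(e^{γx/d} ω')' = -(r/d) e^{γx/d} ω (1 - δ - ω)`, so wherever `0 ≤ ω ≤ 1 - δ` the weighted
slope `e^{γx/d} ω'` is antitone, strictly so where `0 < ω < 1 - δ`; hence `ω` increases to the
left of a critical point and decreases to its right. At an interior maximum point `ω` cannot
exceed `1 - δ`, by the second-derivative test, nor equal it, since by Grönwall it would then stay
at the equilibrium `1 - δ` up to the boundary. An interior zero is a critical point, so it would
force `ω ≡ 0`. The maximum point is then a peak, and a function has at most one peak.
-/

open Real Set

section Calculus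

variable {a b c x₀ : ℝ} {f f' f'' : ℝ → ℝ}

theorem hasDerivAt_of_mem_Ioo (hf : ∀ x ∈ Icc a b, HasDerivWithinAt f (f' x) (Icc a b) x)
    {x : ℝ} (hx : x ∈ Ioo a b) : HasDerivAt f (f' x) x :=
  (hf x (Ioo_subset_Icc_self hx)).hasDerivAt (Icc_mem_nhds hx.1 hx.2)

theorem monotoneOn_Icc_of_hasDerivWithinAt {s : Set ℝ}
    (hf : ∀ x ∈ s, HasDerivWithinAt f (f' x) s x) (hs : Icc a b ⊆ s)
    (h : ∀ x ∈ Ioo a b, 0 ≤ f' x) : MonotoneOn f (Icc a b) :=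
  monotoneOn_of_hasDerivWithinAt_nonneg (convex_Icc a b)
    (fun x hx => (hf x (hs hx)).continuousWithinAt.mono hs)
    (fun x hx => (hf x (hs (interior_subset hx))).mono (interior_subset.trans hs))
    (by rwa [interior_Icc])

theorem antitoneOn_Icc_of_hasDerivWithinAt {s : Set ℝ}
    (hf : ∀ x ∈ s, HasDerivWithinAt f (f' x) s x) (hs : Icc a b ⊆ s)
    (h : ∀ x ∈ Ioo a b, f' x ≤ 0) : AntitoneOn f (Icc a b) :=
  antitoneOn_of_hasDerivWithinAt_nonpos (convex_Icc a b)
    (fun x hx => (hf x (hs hx)).continuousWithinAt.mono hs)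
    (fun x hx => (hf x (hs (interior_subset hx))).mono (interior_subset.trans hs))
    (by rwa [interior_Icc])

theorem strictMonoOn_Icc_of_hasDerivWithinAt {s : Set ℝ}
    (hf : ∀ x ∈ s, HasDerivWithinAt f (f' x) s x) (hs : Icc a b ⊆ s)
    (h : ∀ x ∈ Ioo a b, 0 < f' x) : StrictMonoOn f (Icc a b) :=
  strictMonoOn_of_hasDerivWithinAt_pos (convex_Icc a b)
    (fun x hx => (hf x (hs hx)).continuousWithinAt.mono hs)
    (fun x hx => (hf x (hs (interior_subset hx))).mono (interior_subset.trans hs))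
    (by rwa [interior_Icc])

theorem strictAntiOn_Icc_of_hasDerivWithinAt {s : Set ℝ}
    (hf : ∀ x ∈ s, HasDerivWithinAt f (f' x) s x) (hs : Icc a b ⊆ s)
    (h : ∀ x ∈ Ioo a b, f' x < 0) : StrictAntiOn f (Icc a b) :=
  strictAntiOn_of_hasDerivWithinAt_neg (convex_Icc a b)
    (fun x hx => (hf x (hs hx)).continuousWithinAt.mono hs)
    (fun x hx => (hf x (hs (interior_subset hx))).mono (interior_subset.trans hs))
    (by rwa [interior_Icc])

theorem exists_isMaxOn_Ioo_of_lt (hf : ContinuousOn f (Icc a b)) {z : ℝ} (hz : z ∈ Icc a b)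
    (ha : f a < f z) (hb : f b < f z) : ∃ x₀ ∈ Ioo a b, IsMaxOn f (Icc a b) x₀ := by
  obtain ⟨x₀, hx₀, hmax⟩ := isCompact_Icc.exists_isMaxOn ⟨z, hz⟩ hf
  refine ⟨x₀, ⟨hx₀.1.lt_of_ne ?_, hx₀.2.lt_of_ne ?_⟩, hmax⟩
  · rintro rfl; exact (hmax hz).not_gt ha
  · rintro rfl; exact (hmax hz).not_gt hb

theorem IsLocalMax.hasDerivAt_deriv_nonpos {f'' : ℝ} (h : IsLocalMax f x₀)
    (hf : ∀ᶠ x in nhds x₀, HasDerivAt f (f' x) x) (hf' : HasDerivAt f' f'' x₀) :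
    f'' ≤ 0 := by
  have hderiv : deriv f =ᶠ[nhds x₀] f' := hf.mono fun x hx => hx.deriv
  have hderiv2 : deriv (deriv f) x₀ = f'' := (hf'.congr_of_eventuallyEq hderiv).deriv
  by_contra! hpos
  have hmin := isLocalMin_of_deriv_deriv_pos (hderiv2 ▸ hpos) h.deriv_eq_zero
    hf.self_of_nhds.continuousAt
  have hconst : f =ᶠ[nhds x₀] fun _ => f x₀ :=
    (hmin.and h).mono fun x hx => le_antisymm hx.2 hx.1
  rw [← hderiv2, hconst.deriv.deriv_eq] at hpos
  simp at hpos

theorem eq_zero_of_abs_deriv2_le_of_eq_zero_right {L : ℝ}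
    (hf : ∀ x ∈ Icc a b, HasDerivWithinAt f (f' x) (Icc a b) x)
    (hf' : ∀ x ∈ Icc a b, HasDerivWithinAt f' (f'' x) (Icc a b) x)
    (ha : f a = 0) (ha' : f' a = 0)
    (bound : ∀ x ∈ Ico a b, |f'' x| ≤ L * (|f x| + |f' x|)) :
    ∀ x ∈ Icc a b, f x = 0 := by
  have hsys := eq_zero_of_abs_deriv_le_mul_abs_self_of_eq_zero_right
    (f := fun x => (f x, f' x)) (f' := fun x => (f' x, f'' x)) (K := 1 + 2 * |L|)
    (fun x hx => (hf x hx).continuousWithinAt.prodMk (hf' x hx).continuousWithinAt)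
    (fun x hx => ((hf x (Ico_subset_Icc_self hx)).prodMk (hf' x (Ico_subset_Icc_self hx)))
      |>.mono_of_mem_nhdsWithin (Icc_mem_nhdsGE_of_mem hx))
    (by simp [ha, ha'])
    (fun x hx => by
      have h1 := bound x hx
      have h2 := le_abs_self L
      simp only [Prod.norm_def, Real.norm_eq_abs, max_le_iff]
      constructor <;>
      nlinarith [le_max_left |f x| |f' x|, le_max_right |f x| |f' x|, abs_nonneg L,
        abs_nonneg (f x), abs_nonneg (f' x), abs_nonneg (f'' x)])
  exact fun x hx => congrArg Prod.fst (hsys x hx)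

theorem HasDerivWithinAt.exp_mul_mul {s : Set ℝ} {x q : ℝ} (hf : HasDerivWithinAt f q s x)
    (c : ℝ) :
    HasDerivWithinAt (fun x => Real.exp (c * x) * f x) (Real.exp (c * x) * (q + c * f x)) s x := by
  have hexp : HasDerivWithinAt (fun y => Real.exp (c * y)) (Real.exp (c * x) * c) s x := by
    simpa using ((hasDerivWithinAt_id x s).const_mul c).exp
  exact (hexp.mul hf).congr_deriv (by ring)

theorem antitoneOn_exp_mul_of_hasDerivWithinAt
    (hf : ∀ x ∈ Icc a b, HasDerivWithinAt f (f' x) (Icc a b) x)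
    (h : ∀ x ∈ Ioo a b, f' x + c * f x ≤ 0) :
    AntitoneOn (fun x => Real.exp (c * x) * f x) (Icc a b) :=
  antitoneOn_Icc_of_hasDerivWithinAt (fun x hx => (hf x hx).exp_mul_mul c) subset_rfl
    fun x hx => mul_nonpos_of_nonneg_of_nonpos (exp_pos _).le (h x hx)

theorem strictAntiOn_exp_mul_of_hasDerivWithinAt
    (hf : ∀ x ∈ Icc a b, HasDerivWithinAt f (f' x) (Icc a b) x)
    (h : ∀ x ∈ Ioo a b, f' x + c * f x < 0) :
    StrictAntiOn (fun x => Real.exp (c * x) * f x) (Icc a b) :=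
  strictAntiOn_Icc_of_hasDerivWithinAt (fun x hx => (hf x hx).exp_mul_mul c) subset_rfl
    fun x hx => mul_neg_of_pos_of_neg (exp_pos _) (h x hx)

theorem monotoneOn_antitoneOn_of_deriv2_add_mul_deriv_nonpos
    (hf : ∀ x ∈ Icc a b, HasDerivWithinAt f (f' x) (Icc a b) x)
    (hf' : ∀ x ∈ Icc a b, HasDerivWithinAt f' (f'' x) (Icc a b) x)
    (h : ∀ x ∈ Ioo a b, f'' x + c * f' x ≤ 0) (hx₀ : x₀ ∈ Icc a b) (hcrit : f' x₀ = 0) :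
    MonotoneOn f (Icc a x₀) ∧ AntitoneOn f (Icc x₀ b) := by
  have hg := antitoneOn_exp_mul_of_hasDerivWithinAt hf' h
  constructor
  · refine monotoneOn_Icc_of_hasDerivWithinAt hf (Icc_subset_Icc_right hx₀.2) fun x hx => ?_
    have := hg ⟨hx.1.le, hx.2.le.trans hx₀.2⟩ hx₀ hx.2.le
    simp only [hcrit, mul_zero] at this
    exact (mul_nonneg_iff_of_pos_left (exp_pos _)).mp this
  · refine antitoneOn_Icc_of_hasDerivWithinAt hf (Icc_subset_Icc_left hx₀.1) fun x hx => ?_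
    have := hg hx₀ ⟨hx₀.1.trans hx.1.le, hx.2.le⟩ hx.1.le
    simp only [hcrit, mul_zero] at this
    exact nonpos_of_mul_nonpos_right this (exp_pos _)

theorem strictMonoOn_strictAntiOn_of_deriv2_add_mul_deriv_neg
    (hf : ∀ x ∈ Icc a b, HasDerivWithinAt f (f' x) (Icc a b) x)
    (hf' : ∀ x ∈ Icc a b, HasDerivWithinAt f' (f'' x) (Icc a b) x)
    (h : ∀ x ∈ Ioo a b, f'' x + c * f' x < 0) (hx₀ : x₀ ∈ Icc a b) (hcrit : f' x₀ = 0) :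
    StrictMonoOn f (Icc a x₀) ∧ StrictAntiOn f (Icc x₀ b) := by
  have hg := strictAntiOn_exp_mul_of_hasDerivWithinAt hf' h
  constructor
  · refine strictMonoOn_Icc_of_hasDerivWithinAt hf (Icc_subset_Icc_right hx₀.2) fun x hx => ?_
    have := hg ⟨hx.1.le, hx.2.le.trans hx₀.2⟩ hx₀ hx.2
    simp only [hcrit, mul_zero] at this
    exact pos_of_mul_pos_right this (exp_pos _).le
  · refine strictAntiOn_Icc_of_hasDerivWithinAt hf (Icc_subset_Icc_left hx₀.1) fun x hx => ?_
    have := hg hx₀ ⟨hx₀.1.trans hx.1.le, hx.2.le⟩ hx.1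
    simp only [hcrit, mul_zero] at this
    exact neg_of_mul_neg_right this (exp_pos _).le

theorem pos_of_deriv2_add_mul_deriv_nonpos
    (hf : ∀ x ∈ Icc a b, HasDerivWithinAt f (f' x) (Icc a b) x)
    (hf' : ∀ x ∈ Icc a b, HasDerivWithinAt f' (f'' x) (Icc a b) x)
    (h : ∀ x ∈ Ioo a b, f'' x + c * f' x ≤ 0) (hnonneg : ∀ x ∈ Icc a b, 0 ≤ f x)
    (hne : ∃ x ∈ Icc a b, f x ≠ 0) : ∀ x ∈ Ioo a b, 0 < f x := by
  intro x₁ hx₁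
  refine (hnonneg x₁ (Ioo_subset_Icc_self hx₁)).lt_of_ne' fun hzero => ?_
  have hmin : IsMinOn f (Icc a b) x₁ := fun y hy => hzero ▸ hnonneg y hy
  have hcrit := (hmin.isLocalMin (Icc_mem_nhds hx₁.1 hx₁.2)).hasDerivAt_eq_zero
    (hasDerivAt_of_mem_Ioo hf hx₁)
  obtain ⟨hmono, hanti⟩ := monotoneOn_antitoneOn_of_deriv2_add_mul_deriv_nonpos hf hf' h
    (Ioo_subset_Icc_self hx₁) hcrit
  obtain ⟨z, hz, hz0⟩ := hne
  refine hz0 (le_antisymm ?_ (hnonneg z hz))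
  rcases le_total z x₁ with hzx | hxz
  · exact hzero ▸ hmono ⟨hz.1, hzx⟩ ⟨hx₁.1.le, le_rfl⟩ hzx
  · exact hzero ▸ hanti ⟨le_rfl, hx₁.2.le⟩ ⟨hxz, hz.2⟩ hxz

theorem eq_of_strictMonoOn_strictAntiOn {x y : ℝ} (hx : x ∈ Icc a b) (hy : y ∈ Icc a b)
    (hfx : StrictMonoOn f (Icc a x) ∧ StrictAntiOn f (Icc x b))
    (hfy : StrictMonoOn f (Icc a y) ∧ StrictAntiOn f (Icc y b)) : x = y := by
  wlog hxy : x < y generalizing x y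
  · rcases (not_lt.mp hxy).eq_or_lt with h | h
    · exact h.symm
    · exact (this hy hx hfy hfx h).symm
  exact absurd (hfy.1 ⟨hx.1, hxy.le⟩ ⟨hy.1, le_rfl⟩ hxy)
    (hfx.2 ⟨le_rfl, hx.2⟩ ⟨hxy.le, hy.2⟩ hxy).asymm

theorem existsUnique_peak_of_deriv2_add_mul_deriv_neg
    (hf : ∀ x ∈ Icc a b, HasDerivWithinAt f (f' x) (Icc a b) x)
    (hf' : ∀ x ∈ Icc a b, HasDerivWithinAt f' (f'' x) (Icc a b) x)
    (h : ∀ x ∈ Ioo a b, f'' x + c * f' x < 0) (hx₀ : x₀ ∈ Ioo a b) (hcrit : f' x₀ = 0) :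
    ∃! x, x ∈ Ioo a b ∧ StrictMonoOn f (Icc a x) ∧ StrictAntiOn f (Icc x b) := by
  have hpeak := strictMonoOn_strictAntiOn_of_deriv2_add_mul_deriv_neg hf hf' h
    (Ioo_subset_Icc_self hx₀) hcrit
  refine ⟨x₀, ⟨hx₀, hpeak⟩, fun y ⟨hy, hpeak_y⟩ => ?_⟩
  exact eq_of_strictMonoOn_strictAntiOn (Ioo_subset_Icc_self hy) (Ioo_subset_Icc_self hx₀)
    hpeak_y hpeak

end Calculus

theorem lt_of_isMaxOn_of_fisherKPP {a b d r γ κ x₀ : ℝ} {ω ω' ω'' : ℝ → ℝ}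
    (hd : 0 < d) (hr : 0 < r) (hκ : 0 < κ)
    (hω : ∀ x ∈ Icc a b, HasDerivWithinAt ω (ω' x) (Icc a b) x)
    (hω' : ∀ x ∈ Icc a b, HasDerivWithinAt ω' (ω'' x) (Icc a b) x)
    (hnonneg : ∀ x ∈ Icc a b, 0 ≤ ω x) (hb : ω b = 0)
    (hode : ∀ x ∈ Ioo a b, -d * ω'' x - γ * ω' x = r * ω x * (κ - ω x))
    (hx₀ : x₀ ∈ Ioo a b) (hmax : IsMaxOn ω (Icc a b) x₀) : ω x₀ < κ := by
  have hlocal := hmax.isLocalMax (Icc_mem_nhds hx₀.1 hx₀.2)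
  have hcrit := hlocal.hasDerivAt_eq_zero (hasDerivAt_of_mem_Ioo hω hx₀)
  by_contra! hge
  rcases hge.lt_or_eq with hgt | heq
  · have hconcave := hlocal.hasDerivAt_deriv_nonpos
      (Filter.eventually_of_mem (Ioo_mem_nhds hx₀.1 hx₀.2) fun _ hx => hasDerivAt_of_mem_Ioo hω hx)
      (hasDerivAt_of_mem_Ioo hω' hx₀)
    have hode₀ := hode x₀ hx₀
    rw [hcrit] at hode₀
    nlinarith [mul_pos (mul_pos hr (hκ.trans hgt)) (sub_pos.2 hgt)]
  · -- `κ` is an equilibrium, so `ω - κ` has zero Cauchy data at `x₀` and a linear bound.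
    have hsub : Icc x₀ b ⊆ Icc a b := Icc_subset_Icc_left hx₀.1.le
    have hzero := eq_zero_of_abs_deriv2_le_of_eq_zero_right (a := x₀) (b := b)
      (f := fun x => ω x - κ) (L := (|γ| + r * κ) / d)
      (fun x hx => ((hω x (hsub hx)).sub_const κ).mono hsub)
      (fun x hx => (hω' x (hsub hx)).mono hsub) (by simp [heq]) hcrit ?_ b
      ⟨hx₀.2.le, le_rfl⟩
    · simp only [hb] at hzero; linarith
    · intro x hx
      have hxI : x ∈ Ioo a b := ⟨hx₀.1.trans_le hx.1, hx.2⟩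
      have h0 := hnonneg x (Ioo_subset_Icc_self hxI)
      have hκx : ω x ≤ κ := heq ▸ hmax (Ioo_subset_Icc_self hxI)
      have hdω : d * ω'' x = -(γ * ω' x + r * ω x * (κ - ω x)) := by linarith [hode x hxI]
      rw [abs_of_nonpos (sub_nonpos.2 hκx), neg_sub, div_mul_eq_mul_div, le_div_iff₀ hd]
      have hlogistic : 0 ≤ r * ω x * (κ - ω x) := by
        have := sub_nonneg.2 hκx
        positivity
      calc |ω'' x| * d = |γ * ω' x + r * ω x * (κ - ω x)| := by
            rw [← abs_neg (γ * ω' x + _), ← hdω, abs_mul, abs_of_pos hd, mul_comm]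
        _ ≤ |γ| * |ω' x| + r * ω x * (κ - ω x) := by
            refine (abs_add_le _ _).trans ?_
            rw [abs_mul γ, abs_of_nonneg hlogistic]
        _ ≤ (|γ| + r * κ) * (κ - ω x + |ω' x|) := by
            nlinarith [abs_nonneg γ, mul_nonneg (mul_nonneg hr.le hκ.le) (abs_nonneg (ω' x)),
              mul_nonneg hr.le (sq_nonneg (κ - ω x))]

theorem omega_shape_general
    (d r δ R γ : ℝ) (hd : 0 < d) (hr : 0 < r)
    (hδ1 : δ < 1)
    (ω ω' ω'' : ℝ → ℝ)
    (hω1 : ∀ x ∈ Set.Icc (-R) R, HasDerivWithinAt ω (ω' x) (Set.Icc (-R) R) x)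
    (hω2 : ∀ x ∈ Set.Icc (-R) R, HasDerivWithinAt ω' (ω'' x) (Set.Icc (-R) R) x)
    (hnonneg : ∀ x ∈ Set.Icc (-R) R, 0 ≤ ω x)
    (hne : ∃ x ∈ Set.Icc (-R) R, ω x ≠ 0)
    (hbdl : ω (-R) = 0) (hbdr : ω R = 0)
    (hode : ∀ x ∈ Set.Ioo (-R) R, -d * ω'' x - γ * ω' x = r * ω x * (1 - δ - ω x)) :
    (∀ x ∈ Set.Icc (-R) R, ω x < 1 - δ) ∧
    (∀ x ∈ Set.Ioo (-R) R, 0 < ω x) ∧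
    (∃! xstar, xstar ∈ Set.Ioo (-R) R ∧
      StrictMonoOn ω (Set.Icc (-R) xstar) ∧ StrictAntiOn ω (Set.Icc xstar R)) := by
  obtain ⟨z, hz, hz0⟩ := hne
  have hzpos : 0 < ω z := (hnonneg z hz).lt_of_ne' hz0
  obtain ⟨x₀, hx₀, hmax⟩ := exists_isMaxOn_Ioo_of_lt
    (fun x hx => (hω1 x hx).continuousWithinAt) hz (hbdl ▸ hzpos) (hbdr ▸ hzpos)
  have hcrit := (hmax.isLocalMax (Icc_mem_nhds hx₀.1 hx₀.2)).hasDerivAt_eq_zero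
    (hasDerivAt_of_mem_Ioo hω1 hx₀)
  have hbelow : ∀ x ∈ Icc (-R) R, ω x < 1 - δ := fun x hx => (hmax hx).trans_lt <|
    lt_of_isMaxOn_of_fisherKPP hd hr (sub_pos.2 hδ1) hω1 hω2 hnonneg hbdr hode hx₀ hmax
  have hdamped : ∀ x ∈ Ioo (-R) R,
      ω'' x + γ / d * ω' x = -(r / d * (ω x * (1 - δ - ω x))) := by
    intro x hx
    field_simp
    linarith [hode x hx]
  have hpos : ∀ x ∈ Ioo (-R) R, 0 < ω x := by
    refine pos_of_deriv2_add_mul_deriv_nonpos (c := γ / d) hω1 hω2 (fun x hx => ?_) hnonneg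
      ⟨z, hz, hz0⟩
    have := sub_nonneg.2 (hbelow x (Ioo_subset_Icc_self hx)).le
    have := hnonneg x (Ioo_subset_Icc_self hx)
    rw [hdamped x hx, neg_nonpos]
    positivity
  refine ⟨hbelow, hpos, existsUnique_peak_of_deriv2_add_mul_deriv_neg (c := γ / d) hω1 hω2
    (fun x hx => ?_) hx₀ hcrit⟩
  have := sub_pos.2 (hbelow x (Ioo_subset_Icc_self hx))
  have := hpos x hx
  rw [hdamped x hx, neg_neg_iff_pos]
  positivity

/-- A nonnegative nonzero solution of the Dirichlet problem
`-dω'' - γω' = rω(1-δ-ω)` on `(-R,R)`, `ω(±R) = 0`, with `γ = 2√(r(1-δ)d) - δ`,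
satisfies `ω < 1-δ`, is positive on `(-R,R)`, and is increasing then decreasing,
attaining its maximum at a unique interior point. -/
theorem omega_shape
    (d r δ R γ : ℝ) (hd : 0 < d) (hr : 0 < r)
    (hδ0 : 0 ≤ δ) (hδ1 : δ < 1) (hR : 0 < R)
    (hγ : γ = 2 * Real.sqrt (r * (1 - δ) * d) - δ)
    (ω ω' ω'' : ℝ → ℝ)
    (hω1 : ∀ x ∈ Set.Icc (-R) R, HasDerivWithinAt ω (ω' x) (Set.Icc (-R) R) x)
    (hω2 : ∀ x ∈ Set.Icc (-R) R, HasDerivWithinAt ω' (ω'' x) (Set.Icc (-R) R) x)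
    (hω''c : ContinuousOn ω'' (Set.Icc (-R) R))
    (hnonneg : ∀ x ∈ Set.Icc (-R) R, 0 ≤ ω x)
    (hne : ∃ x ∈ Set.Icc (-R) R, ω x ≠ 0)
    (hbdl : ω (-R) = 0) (hbdr : ω R = 0)
    (hode : ∀ x ∈ Set.Ioo (-R) R, -d * ω'' x - γ * ω' x = r * ω x * (1 - δ - ω x)) :
    (∀ x ∈ Set.Icc (-R) R, ω x < 1 - δ) ∧
    (∀ x ∈ Set.Ioo (-R) R, 0 < ω x) ∧
    (∃! xstar, xstar ∈ Set.Ioo (-R) R ∧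
      StrictMonoOn ω (Set.Icc (-R) xstar) ∧ StrictAntiOn ω (Set.Icc xstar R)) :=
  omega_shape_general d r δ R γ hd hr hδ1 ω ω' ω'' hω1 hω2 hnonneg hne hbdl hbdr hode
end

section
/- Let d > 0, r > 0, a ∈ (0,1), b > 1, and let c ≥ c_LLW. Let φ, ψ : ℝ → [0,1] be C² functions satisfying φ''(ξ) + c·φ'(ξ) + φ(ξ)(1 − φ(ξ) − a·ψ(ξ)) = 0 and d·ψ''(ξ) + c·ψ'(ξ) + r·ψ(ξ)(1 − ψ(ξ) − b·φ(ξ)) = 0 for all ξ ∈ ℝ, with φ(ξ) → 1 and ψ(ξ) → 0 as ξ → −∞, and φ(ξ) → 0 and ψ(ξ) → 1 as ξ → +∞. Then (φ, ψ) is componentwise strictly monotonic: for all ξ₁ < ξ₂ one has φ(ξ₁) > φ(ξ₂) and ψ(ξ₁) < ψ(ξ₂). -/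
open Real Filter Set

noncomputable section

/-- Existence of a componentwise strictly monotone traveling-wave profile `(φ, ψ)`
of speed `c` connecting `(1,0)` (at `-∞`) to `(0,1)` (at `+∞`):
`φ'' + cφ' + φ(1 - φ - aψ) = 0`, `dψ'' + cψ' + rψ(1 - ψ - bφ) = 0`. -/
def IsTW (d r a b c : ℝ) : Prop :=
  ∃ φ ψ : ℝ → ℝ,
    ContDiff ℝ 2 φ ∧ ContDiff ℝ 2 ψ ∧
    (∀ ξ, φ ξ ∈ Set.Icc (0:ℝ) 1) ∧ (∀ ξ, ψ ξ ∈ Set.Icc (0:ℝ) 1) ∧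
    StrictAnti φ ∧ StrictMono ψ ∧
    (∀ ξ, deriv (deriv φ) ξ + c * deriv φ ξ + φ ξ * (1 - φ ξ - a * ψ ξ) = 0) ∧
    (∀ ξ, d * deriv (deriv ψ) ξ + c * deriv ψ ξ + r * ψ ξ * (1 - ψ ξ - b * φ ξ) = 0) ∧
    Tendsto φ atBot (nhds 1) ∧ Tendsto ψ atBot (nhds 0) ∧
    Tendsto φ atTop (nhds 0) ∧ Tendsto ψ atTop (nhds 1)

/-- The Lewis–Li–Weinberger spreading speed: the infimum of the speeds of
componentwise monotone traveling waves connecting `(1,0)` to `(0,1)`. -/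
def cLLW (d r a b : ℝ) : ℝ := sInf {c : ℝ | IsTW d r a b c}

open Topology

/-!
A zero of `φ` or `ψ` would be a double zero of a linear second-order equation, so by uniqueness
for ODEs the component would vanish identically, against its limits; likewise neither reaches `1`.
At an interior local maximum (minimum) of a positive component its reaction term is `≥ 0` (`≤ 0`).
If `ψ` drops somewhere from a value `≥ p`, the limits at `±∞` produce a local maximum of `ψ`
followed by a local minimum, where these signs make `φ` rise from a value `≤ (1 - p) / b`;
in the same way a rise of `φ` from a value `≤ q` produces a drop of `ψ` from a value
`≥ (1 - q) / a`. For `a < 1 < b` the round trip `p ↦ (1 - (1 - p) / b) / a` raises every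
`p ∈ [0, 1]` by a fixed amount, so `ψ` would drop from arbitrarily high levels: hence `ψ` is
monotone and `φ` antitone. Finally, a flat piece of one component forces the other to be flat
there too, at a coexistence state `φ + a ψ = 1 = ψ + b φ`, which has no positive solution.
-/

theorem exists_isLocalMax_lt_of_tendsto_atBot {f : ℝ → ℝ} {L x y : ℝ} (hf : Continuous f)
    (hL : Tendsto f atBot (𝓝 L)) (hxy : x < y) (hLx : L < f x) (hyx : f y < f x) :
    ∃ z < y, IsLocalMax f z ∧ f x ≤ f z := by
  obtain ⟨R, hR⟩ := eventually_atBot.mp (hL.eventually_lt_const hLx)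
  have hx : x ∈ Icc (min R x) y := ⟨min_le_right _ _, hxy.le⟩
  obtain ⟨z, hz, hmax⟩ := isCompact_Icc.exists_isMaxOn ⟨x, hx⟩ hf.continuousOn
  have hxz : f x ≤ f z := hmax hx
  have hzy : z < y := hz.2.lt_of_ne (by rintro rfl; linarith)
  refine ⟨z, hzy, IsMaxOn.isLocalMax (s := Iic y) (fun t ht => ?_) (Iic_mem_nhds hzy), hxz⟩
  rcases le_or_gt (min R x) t with h | h
  · exact hmax ⟨h, ht⟩
  · exact (hR t (h.le.trans (min_le_left _ _))).le.trans hxz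

theorem exists_isLocalMin_gt_of_tendsto_atTop {f : ℝ → ℝ} {M x y : ℝ} (hf : Continuous f)
    (hM : Tendsto f atTop (𝓝 M)) (hxy : x < y) (hyM : f y < M) (hyx : f y < f x) :
    ∃ w > x, IsLocalMin f w ∧ f w ≤ f y := by
  obtain ⟨R, hR⟩ := eventually_atTop.mp (hM.eventually_const_lt hyM)
  have hy : y ∈ Icc x (max R y) := ⟨hxy.le, le_max_right _ _⟩
  obtain ⟨w, hw, hmin⟩ := isCompact_Icc.exists_isMinOn ⟨y, hy⟩ hf.continuousOn
  have hwy : f w ≤ f y := hmin hy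
  have hxw : x < w := hw.1.lt_of_ne (by rintro rfl; linarith)
  refine ⟨w, hxw, IsMinOn.isLocalMin (s := Ici x) (fun t ht => ?_) (Ici_mem_nhds hxw), hwy⟩
  rcases le_or_gt t (max R y) with h | h
  · exact hmin ⟨ht, h⟩
  · exact hwy.trans (hR t ((le_max_left _ _).trans h.le)).le

theorem exists_isLocalMax_lt_isLocalMin_of_tendsto {f : ℝ → ℝ} {L M x y : ℝ}
    (hf : Continuous f) (hL : Tendsto f atBot (𝓝 L)) (hM : Tendsto f atTop (𝓝 M))
    (hxy : x < y) (hyx : f y < f x) (hLx : L < f x) (hyM : f y < M) :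
    ∃ z₁ z₂, z₁ < z₂ ∧ IsLocalMax f z₁ ∧ IsLocalMin f z₂ ∧ f x ≤ f z₁ ∧ f z₂ ≤ f y := by
  obtain ⟨z₁, hz₁y, hmax, hxz₁⟩ := exists_isLocalMax_lt_of_tendsto_atBot hf hL hxy hLx hyx
  obtain ⟨z₂, hz₁₂, hmin, hz₂y⟩ :=
    exists_isLocalMin_gt_of_tendsto_atTop hf hM hz₁y hyM (hyx.trans_le hxz₁)
  exact ⟨z₁, z₂, hz₁₂, hmax, hmin, hxz₁, hz₂y⟩

theorem eventuallyEq_deriv_of_eventuallyEq_const {f : ℝ → ℝ} {z m : ℝ}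
    (h : f =ᶠ[𝓝 z] fun _ => m) : deriv f =ᶠ[𝓝 z] fun _ => 0 := by
  simpa using h.deriv

theorem IsLocalMax.deriv_deriv_nonpos {f : ℝ → ℝ} {z : ℝ} (hf : ContDiff ℝ 2 f)
    (h : IsLocalMax f z) : deriv (deriv f) z ≤ 0 := by
  by_contra! hpos
  have hmin := isLocalMin_of_deriv_deriv_pos hpos h.deriv_eq_zero hf.continuous.continuousAt
  have hconst : f =ᶠ[𝓝 z] fun _ => f z := by
    filter_upwards [h, hmin] with t hmax' hmin' using le_antisymm hmax' hmin'
  have := (eventuallyEq_deriv_of_eventuallyEq_const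
    (eventuallyEq_deriv_of_eventuallyEq_const hconst)).self_of_nhds
  linarith

theorem IsLocalMin.deriv_deriv_nonneg {f : ℝ → ℝ} {z : ℝ} (hf : ContDiff ℝ 2 f)
    (h : IsLocalMin f z) : 0 ≤ deriv (deriv f) z := by
  by_contra! hneg
  have hmax := isLocalMax_of_deriv_deriv_neg hneg h.deriv_eq_zero hf.continuous.continuousAt
  have hconst : f =ᶠ[𝓝 z] fun _ => f z := by
    filter_upwards [h, hmax] with t hmin' hmax' using le_antisymm hmax' hmin'
  have := (eventuallyEq_deriv_of_eventuallyEq_const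
    (eventuallyEq_deriv_of_eventuallyEq_const hconst)).self_of_nhds
  linarith

section OrderTopology

variable {α β : Type*} [LinearOrder α] [TopologicalSpace α] [OrderTopology α] [DenselyOrdered α]
  [PartialOrder β] {f : α → β}

theorem Monotone.strictMono_of_forall_not_eventuallyEq (hf : Monotone f)
    (h : ∀ z, ¬ f =ᶠ[𝓝 z] fun _ => f z) : StrictMono f := by
  intro x y hxy
  refine (hf hxy.le).lt_of_ne fun heq => ?_
  obtain ⟨z, hxz, hzy⟩ := exists_between hxy
  have hconst : ∀ t ∈ Icc x y, f t = f x := fun t ht =>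
    le_antisymm (heq ▸ hf ht.2) (hf ht.1)
  refine h z ?_
  filter_upwards [Ioo_mem_nhds hxz hzy] with t ht
  rw [hconst t (Ioo_subset_Icc_self ht), hconst z ⟨hxz.le, hzy.le⟩]

theorem Antitone.strictAnti_of_forall_not_eventuallyEq (hf : Antitone f)
    (h : ∀ z, ¬ f =ᶠ[𝓝 z] fun _ => f z) : StrictAnti f := by
  intro x y hxy
  refine (hf hxy.le).lt_of_ne fun heq => ?_
  obtain ⟨z, hxz, hzy⟩ := exists_between hxy
  have hconst : ∀ t ∈ Icc x y, f t = f x := fun t ht =>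
    le_antisymm (hf ht.1) (heq ▸ hf ht.2)
  refine h z ?_
  filter_upwards [Ioo_mem_nhds hxz hzy] with t ht
  rw [hconst t (Ioo_subset_Icc_self ht), hconst z ⟨hxz.le, hzy.le⟩]

end OrderTopology

section LinearOde

variable {u g : ℝ → ℝ} {e κ G : ℝ}

theorem lipschitzWith_companion_field (he : e ≠ 0) {γ : ℝ} (hγ : |γ| ≤ G) :
    LipschitzWith (max 1 ((|κ| + G) / |e|)).toNNReal
      (fun p : ℝ × ℝ => (p.2, -(κ * p.2 + p.1 * γ) / e)) := by
  refine LipschitzWith.of_dist_le_mul fun p q => ?_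
  set K := max 1 ((|κ| + G) / |e|)
  have hK1 : 1 ≤ K := le_max_left _ _
  have hKe : (|κ| + G) / |e| ≤ K := le_max_right _ _
  rw [Real.coe_toNNReal _ (by linarith), Prod.dist_eq, Prod.dist_eq]
  set D := max (dist p.1 q.1) (dist p.2 q.2)
  have h1 : |q.1 - p.1| ≤ D := abs_sub_comm q.1 p.1 ▸ le_max_left _ _
  have h2 : |q.2 - p.2| ≤ D := abs_sub_comm q.2 p.2 ▸ le_max_right _ _
  have hD : 0 ≤ D := (abs_nonneg _).trans h1
  refine max_le (by simp only [Real.dist_eq]; nlinarith [abs_sub_comm p.2 q.2]) ?_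
  have hnum : |κ * (q.2 - p.2) + γ * (q.1 - p.1)| ≤ (|κ| + G) * D := by
    calc _ ≤ |κ| * |q.2 - p.2| + |γ| * |q.1 - p.1| := by
          simpa only [abs_mul] using abs_add_le (κ * (q.2 - p.2)) (γ * (q.1 - p.1))
      _ ≤ |κ| * D + G * D := by
          gcongr
          exact (abs_nonneg γ).trans hγ
      _ = (|κ| + G) * D := by ring
  rw [Real.dist_eq, show -(κ * p.2 + p.1 * γ) / e - -(κ * q.2 + q.1 * γ) / e
      = (κ * (q.2 - p.2) + γ * (q.1 - p.1)) / e by ring, abs_div, div_le_iff₀ (abs_pos.mpr he)]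
  calc _ ≤ (|κ| + G) * D := hnum
    _ = (|κ| + G) / |e| * D * |e| := by field_simp
    _ ≤ K * D * |e| := by gcongr

theorem eq_zero_of_linear_ode (he : e ≠ 0) (hu : ContDiff ℝ 2 u)
    (hode : ∀ t, e * deriv (deriv u) t + κ * deriv u t + u t * g t = 0)
    (hg : ∀ t, |g t| ≤ G) {t₀ : ℝ} (h₀ : u t₀ = 0) (h₀' : deriv u t₀ = 0) : u = 0 := by
  set v : ℝ → ℝ × ℝ → ℝ × ℝ := fun t p => (p.2, -(κ * p.2 + p.1 * g t) / e) with hv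
  have hsol : ∀ t, HasDerivAt (fun t => (u t, deriv u t)) (v t (u t, deriv u t)) t ∧
      (u t, deriv u t) ∈ univ := by
    refine fun t => ⟨?_, trivial⟩
    have hu'' : deriv (deriv u) t = -(κ * deriv u t + u t * g t) / e := by
      field_simp
      linear_combination hode t
    simpa only [hv, hu''] using
      (hu.differentiable two_ne_zero t).hasDerivAt.prodMk (hu.differentiable_deriv_two t).hasDerivAt
  have hzero : ∀ t, HasDerivAt (fun _ => ((0 : ℝ), (0 : ℝ))) (v t (0, 0)) t ∧
      ((0 : ℝ), (0 : ℝ)) ∈ univ :=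
    fun t => ⟨(hasDerivAt_const t _).congr_deriv (by simp [hv]; rfl), trivial⟩
  have hvu := ODE_solution_unique_univ (t₀ := t₀)
    (fun t => (lipschitzWith_companion_field he (hg t)).lipschitzOnWith) hsol hzero
    (by simp [h₀, h₀'])
  funext t
  exact congrArg Prod.fst (congrFun hvu t)

theorem pos_of_linear_ode (he : e ≠ 0) (hu : ContDiff ℝ 2 u)
    (hode : ∀ t, e * deriv (deriv u) t + κ * deriv u t + u t * g t = 0)
    (hg : ∀ t, |g t| ≤ G) (hnonneg : ∀ t, 0 ≤ u t) (hne : u ≠ 0) (t : ℝ) : 0 < u t := by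
  refine (hnonneg t).lt_of_ne fun h => hne ?_
  have hmin : IsLocalMin u t := Eventually.of_forall fun s => h ▸ hnonneg s
  exact eq_zero_of_linear_ode he hu hode hg h.symm hmin.deriv_eq_zero

theorem nonneg_of_isLocalMax_of_linear_ode (he : 0 < e) (hu : ContDiff ℝ 2 u) {z : ℝ}
    (hode : e * deriv (deriv u) z + κ * deriv u z + u z * g z = 0) (hpos : 0 < u z)
    (h : IsLocalMax u z) : 0 ≤ g z := by
  have hu'' := h.deriv_deriv_nonpos hu
  rw [h.deriv_eq_zero] at hode
  exact (mul_nonneg_iff_of_pos_left hpos).mp (by nlinarith)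

theorem nonpos_of_isLocalMin_of_linear_ode (he : 0 < e) (hu : ContDiff ℝ 2 u) {z : ℝ}
    (hode : e * deriv (deriv u) z + κ * deriv u z + u z * g z = 0) (hpos : 0 < u z)
    (h : IsLocalMin u z) : g z ≤ 0 := by
  have hu'' := h.deriv_deriv_nonneg hu
  rw [h.deriv_eq_zero] at hode
  exact (mul_nonpos_iff_pos_imp_nonpos.mp (by nlinarith)).1 hpos

theorem eventually_coeff_eq_zero_of_eventuallyEq_const
    (hode : ∀ t, e * deriv (deriv u) t + κ * deriv u t + u t * g t = 0) (hpos : ∀ t, 0 < u t)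
    {z : ℝ} (h : u =ᶠ[𝓝 z] fun _ => u z) : ∀ᶠ t in 𝓝 z, g t = 0 := by
  have hu' := eventuallyEq_deriv_of_eventuallyEq_const h
  filter_upwards [hu', eventuallyEq_deriv_of_eventuallyEq_const hu'] with t ht' ht''
  have := hode t
  rw [ht', ht'', mul_zero, mul_zero, zero_add, zero_add] at this
  exact (mul_eq_zero.mp this).resolve_left (hpos t).ne'

end LinearOde

section Competition

variable {u w : ℝ → ℝ} {e κ k γ : ℝ}

theorem pos_of_competition (he : e ≠ 0) (hu : ContDiff ℝ 2 u)
    (hode : ∀ t, e * deriv (deriv u) t + κ * deriv u t + k * u t * (1 - u t - γ * w t) = 0)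
    (hu01 : ∀ t, u t ∈ Icc 0 1) (hw01 : ∀ t, w t ∈ Icc 0 1) (hne : u ≠ 0) (t : ℝ) :
    0 < u t := by
  refine pos_of_linear_ode he hu (κ := κ) (g := fun t => k * (1 - u t - γ * w t))
    (G := |k| * (2 + |γ|))
    (fun t => by linear_combination hode t) (fun t => ?_) (fun t => (hu01 t).1) hne t
  have hγw : |γ * w t| ≤ |γ| := by
    rw [abs_mul]
    exact mul_le_of_le_one_right (abs_nonneg γ) (abs_le.mpr ⟨by linarith [(hw01 t).1], (hw01 t).2⟩)
  obtain ⟨hγw₁, hγw₂⟩ := abs_le.mp hγw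
  rw [abs_mul]
  exact mul_le_mul_of_nonneg_left
    (abs_le.mpr ⟨by linarith [(hu01 t).2], by linarith [(hu01 t).1, abs_nonneg γ]⟩) (abs_nonneg k)

theorem lt_one_of_competition (he : 0 < e) (hk : 0 < k) (hγ : 0 < γ) (hu : ContDiff ℝ 2 u)
    (hode : ∀ t, e * deriv (deriv u) t + κ * deriv u t + k * u t * (1 - u t - γ * w t) = 0)
    (hle : ∀ t, u t ≤ 1) (hw : ∀ t, 0 < w t) (t : ℝ) : u t < 1 := by
  refine (hle t).lt_of_ne fun h => ?_
  have hmax : IsLocalMax u t := Eventually.of_forall fun s => h ▸ hle s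
  have := nonneg_of_isLocalMax_of_linear_ode he hu (κ := κ) (g := fun t => k * (1 - u t - γ * w t))
    (by linear_combination hode t) (h ▸ one_pos) hmax
  simp only [h, sub_self, zero_sub] at this
  nlinarith [mul_pos hk (mul_pos hγ (hw t))]

theorem mul_le_one_sub_of_isLocalMax_of_competition (he : 0 < e) (hk : 0 < k)
    (hu : ContDiff ℝ 2 u)
    (hode : ∀ t, e * deriv (deriv u) t + κ * deriv u t + k * u t * (1 - u t - γ * w t) = 0)
    (hpos : ∀ t, 0 < u t) {z : ℝ} (h : IsLocalMax u z) : γ * w z ≤ 1 - u z := by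
  have := nonneg_of_isLocalMax_of_linear_ode he hu (κ := κ) (g := fun t => k * (1 - u t - γ * w t))
    (by linear_combination hode z) (hpos z) h
  linarith [(mul_nonneg_iff_of_pos_left hk).mp this]

theorem one_sub_le_mul_of_isLocalMin_of_competition (he : 0 < e) (hk : 0 < k)
    (hu : ContDiff ℝ 2 u)
    (hode : ∀ t, e * deriv (deriv u) t + κ * deriv u t + k * u t * (1 - u t - γ * w t) = 0)
    (hpos : ∀ t, 0 < u t) {z : ℝ} (h : IsLocalMin u z) : 1 - u z ≤ γ * w z := by
  have := nonpos_of_isLocalMin_of_linear_ode he hu (κ := κ) (g := fun t => k * (1 - u t - γ * w t))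
    (by linear_combination hode z) (hpos z) h
  linarith [(mul_nonpos_iff_pos_imp_nonpos.mp this).1 hk]

theorem eventuallyEq_const_of_competition (hk : k ≠ 0) (hγ : γ ≠ 0)
    (hode : ∀ t, e * deriv (deriv u) t + κ * deriv u t + k * u t * (1 - u t - γ * w t) = 0)
    (hpos : ∀ t, 0 < u t) {z : ℝ} (h : u =ᶠ[𝓝 z] fun _ => u z) :
    (w =ᶠ[𝓝 z] fun _ => w z) ∧ u z + γ * w z = 1 := by
  have hrest : ∀ᶠ t in 𝓝 z, u t + γ * w t = 1 := by
    filter_upwards [eventually_coeff_eq_zero_of_eventuallyEq_const (e := e) (κ := κ)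
      (g := fun t => k * (1 - u t - γ * w t))
      (fun t => by linear_combination hode t) hpos h] with t ht
    linear_combination -(mul_eq_zero.mp ht).resolve_left hk
  refine ⟨?_, hrest.self_of_nhds⟩
  filter_upwards [hrest, h] with t ht hut
  exact mul_left_cancel₀ hγ (by linear_combination ht - hrest.self_of_nhds - hut)

end Competition

section Levels

def HasDropAbove (f : ℝ → ℝ) (p : ℝ) : Prop := ∃ x y, x < y ∧ f y < f x ∧ p ≤ f x

def HasRiseBelow (f : ℝ → ℝ) (q : ℝ) : Prop := ∃ x y, x < y ∧ f x < f y ∧ f x ≤ q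

variable {φ ψ : ℝ → ℝ} {a b p q : ℝ}

theorem HasDropAbove.mono (h : HasDropAbove ψ p) (hqp : q ≤ p) : HasDropAbove ψ q :=
  let ⟨x, y, hxy, hdrop, hp⟩ := h
  ⟨x, y, hxy, hdrop, hqp.trans hp⟩

theorem HasDropAbove.hasRiseBelow (h : HasDropAbove ψ p) (hb : 0 < b) (hψc : Continuous ψ)
    (hψbot : Tendsto ψ atBot (𝓝 0)) (hψtop : Tendsto ψ atTop (𝓝 1)) (hψ : ∀ t, ψ t ∈ Ioo 0 1)
    (hmax : ∀ z, IsLocalMax ψ z → b * φ z ≤ 1 - ψ z)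
    (hmin : ∀ z, IsLocalMin ψ z → 1 - ψ z ≤ b * φ z) : HasRiseBelow φ ((1 - p) / b) := by
  obtain ⟨x, y, hxy, hdrop, hp⟩ := h
  obtain ⟨z₁, z₂, hz, hz₁, hz₂, hxz₁, hz₂y⟩ := exists_isLocalMax_lt_isLocalMin_of_tendsto
    hψc hψbot hψtop hxy hdrop (hψ x).1 (hψ y).2
  have h₁ := hmax z₁ hz₁
  have h₂ := hmin z₂ hz₂
  exact ⟨z₁, z₂, hz, lt_of_mul_lt_mul_left (by linarith) hb.le,
    (le_div_iff₀ hb).mpr (by linarith)⟩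

theorem HasRiseBelow.hasDropAbove (h : HasRiseBelow φ q) (ha : 0 < a) (hφc : Continuous φ)
    (hφbot : Tendsto φ atBot (𝓝 1)) (hφtop : Tendsto φ atTop (𝓝 0)) (hφ : ∀ t, φ t ∈ Ioo 0 1)
    (hmin : ∀ z, IsLocalMin φ z → 1 - φ z ≤ a * ψ z)
    (hmax : ∀ z, IsLocalMax φ z → a * ψ z ≤ 1 - φ z) : HasDropAbove ψ ((1 - q) / a) := by
  obtain ⟨x, y, hxy, hrise, hq⟩ := h
  obtain ⟨z₁, z₂, hz, hz₁, hz₂, hxz₁, hz₂y⟩ := exists_isLocalMax_lt_isLocalMin_of_tendsto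
    hφc.neg hφbot.neg hφtop.neg hxy (neg_lt_neg hrise) (neg_lt_neg (hφ x).2)
    (by simpa using (hφ y).1)
  have h₁ := hmin z₁ (by simpa using hz₁.neg)
  have h₂ := hmax z₂ (by simpa using hz₂.neg)
  simp only [Pi.neg_apply, neg_le_neg_iff] at hxz₁ hz₂y
  exact ⟨z₁, z₂, hz, lt_of_mul_lt_mul_left (by linarith) ha.le,
    (div_le_iff₀ ha).mpr (by linarith)⟩

/-- `(1 - (1 - p) / b) / a` is the level reached by one round trip
`HasDropAbove ψ p → HasRiseBelow φ _ → HasDropAbove ψ _`. -/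
theorem add_min_le_one_sub_one_sub_div_div (ha0 : 0 < a) (ha1 : a < 1) (hb : 1 < b)
    (hp : p ∈ Icc 0 1) : p + min ((b - 1) / (a * b)) ((1 - a) / a) ≤ (1 - (1 - p) / b) / a := by
  obtain ⟨hp0, hp1⟩ := hp
  have hb0 : 0 < b := by linarith
  have hsplit : (1 - (1 - p) / b) / a
      = p + ((1 - p) * ((b - 1) / (a * b)) + p * ((1 - a) / a)) := by
    field_simp
    ring
  rw [hsplit]
  have := mul_le_mul_of_nonneg_left (min_le_left ((b - 1) / (a * b)) ((1 - a) / a))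
    (sub_nonneg.mpr hp1)
  have := mul_le_mul_of_nonneg_left (min_le_right ((b - 1) / (a * b)) ((1 - a) / a)) hp0
  nlinarith

theorem zero_notMem_of_bddAbove_of_add_mem {S : Set ℝ} {δ : ℝ} (hδ : 0 < δ) (hS : BddAbove S)
    (hadd : ∀ p ∈ S, 0 ≤ p → p + δ ∈ S) : 0 ∉ S := by
  intro h0
  obtain ⟨B, hB⟩ := hS
  have hmem : ∀ n : ℕ, n * δ ∈ S := by
    intro n
    induction n with
    | zero => simpa using h0
    | succ n ih => simpa [add_mul] using hadd _ ih (by positivity)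
  obtain ⟨n, hn⟩ := exists_nat_gt (B / δ)
  have := hB (hmem n)
  rw [div_lt_iff₀ hδ] at hn
  linarith

theorem antitone_monotone_of_isLocalExtr (ha0 : 0 < a) (ha1 : a < 1) (hb : 1 < b)
    (hφc : Continuous φ) (hψc : Continuous ψ)
    (hφbot : Tendsto φ atBot (𝓝 1)) (hψbot : Tendsto ψ atBot (𝓝 0))
    (hφtop : Tendsto φ atTop (𝓝 0)) (hψtop : Tendsto ψ atTop (𝓝 1))
    (hφ : ∀ t, φ t ∈ Ioo 0 1) (hψ : ∀ t, ψ t ∈ Ioo 0 1)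
    (hφmax : ∀ z, IsLocalMax φ z → a * ψ z ≤ 1 - φ z)
    (hφmin : ∀ z, IsLocalMin φ z → 1 - φ z ≤ a * ψ z)
    (hψmax : ∀ z, IsLocalMax ψ z → b * φ z ≤ 1 - ψ z)
    (hψmin : ∀ z, IsLocalMin ψ z → 1 - ψ z ≤ b * φ z) :
    Antitone φ ∧ Monotone ψ := by
  have hb0 : 0 < b := by linarith
  have hgap : 0 < min ((b - 1) / (a * b)) ((1 - a) / a) :=
    lt_min (div_pos (by linarith) (by positivity)) (div_pos (by linarith) ha0)
  have hle : ∀ p, HasDropAbove ψ p → p ≤ 1 := fun p ⟨x, _, _, _, hp⟩ => hp.trans (hψ x).2.le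
  have hround : ∀ p, HasDropAbove ψ p → HasDropAbove ψ ((1 - (1 - p) / b) / a) := fun p hp =>
    (hp.hasRiseBelow hb0 hψc hψbot hψtop hψ hψmax hψmin).hasDropAbove ha0 hφc hφbot hφtop hφ
      hφmin hφmax
  have hno : ¬ HasDropAbove ψ 0 := zero_notMem_of_bddAbove_of_add_mem hgap ⟨1, hle⟩
    fun p hp hp0 =>
      (hround p hp).mono (add_min_le_one_sub_one_sub_div_div ha0 ha1 hb ⟨hp0, hle p hp⟩)
  refine ⟨antitone_iff_forall_lt.mpr fun x y hxy => not_lt.mp fun hrise => hno ?_,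
    monotone_iff_forall_lt.mpr fun x y hxy => not_lt.mp fun hdrop =>
      hno ⟨x, y, hxy, hdrop, (hψ x).1.le⟩⟩
  exact (HasRiseBelow.hasDropAbove ⟨x, y, hxy, hrise, le_rfl⟩ ha0 hφc hφbot hφtop hφ hφmin
    hφmax).mono (div_nonneg (by linarith [(hφ x).2]) ha0.le)

end Levels

theorem strictAnti_strictMono_of_competition {φ ψ : ℝ → ℝ} {e₁ e₂ κ₁ κ₂ k₁ k₂ a b : ℝ}
    (ha0 : 0 < a) (ha1 : a < 1) (hb : 1 < b) (hk₁ : k₁ ≠ 0) (hk₂ : k₂ ≠ 0)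
    (hφode : ∀ t, e₁ * deriv (deriv φ) t + κ₁ * deriv φ t + k₁ * φ t * (1 - φ t - a * ψ t) = 0)
    (hψode : ∀ t, e₂ * deriv (deriv ψ) t + κ₂ * deriv ψ t + k₂ * ψ t * (1 - ψ t - b * φ t) = 0)
    (hφpos : ∀ t, 0 < φ t) (hψpos : ∀ t, 0 < ψ t) (hφ : Antitone φ) (hψ : Monotone ψ) :
    StrictAnti φ ∧ StrictMono ψ := by
  have hcoex : ∀ z, φ z + a * ψ z = 1 → ψ z + b * φ z = 1 → False := fun z h₁ h₂ => by
    nlinarith [mul_pos (sub_pos.mpr ha1) (hψpos z), mul_pos (sub_pos.mpr hb) (hφpos z)]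
  refine ⟨hφ.strictAnti_of_forall_not_eventuallyEq fun z hz => ?_,
    hψ.strictMono_of_forall_not_eventuallyEq fun z hz => ?_⟩
  · obtain ⟨hψz, hφψ⟩ := eventuallyEq_const_of_competition hk₁ ha0.ne' hφode hφpos hz
    exact hcoex z hφψ (eventuallyEq_const_of_competition hk₂ (by positivity) hψode hψpos hψz).2
  · obtain ⟨hφz, hψφ⟩ := eventuallyEq_const_of_competition hk₂ (by positivity) hψode hψpos hz
    exact hcoex z (eventuallyEq_const_of_competition hk₁ ha0.ne' hφode hφpos hφz).2 hψφ

theorem profile_monotone_general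
    (d r a b c : ℝ) (hd : 0 < d) (hr : 0 < r) (ha0 : 0 < a) (ha1 : a < 1) (hb : 1 < b)
    (φ ψ : ℝ → ℝ)
    (hφreg : ContDiff ℝ 2 φ) (hψreg : ContDiff ℝ 2 ψ)
    (hφmem : ∀ ξ, φ ξ ∈ Set.Icc (0:ℝ) 1) (hψmem : ∀ ξ, ψ ξ ∈ Set.Icc (0:ℝ) 1)
    (hφode : ∀ ξ, deriv (deriv φ) ξ + c * deriv φ ξ + φ ξ * (1 - φ ξ - a * ψ ξ) = 0)
    (hψode : ∀ ξ, d * deriv (deriv ψ) ξ + c * deriv ψ ξ + r * ψ ξ * (1 - ψ ξ - b * φ ξ) = 0)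
    (hφbot : Tendsto φ atBot (nhds 1)) (hψbot : Tendsto ψ atBot (nhds 0))
    (hφtop : Tendsto φ atTop (nhds 0)) (hψtop : Tendsto ψ atTop (nhds 1)) :
    StrictAnti φ ∧ StrictMono ψ := by
  have hφode' : ∀ t, 1 * deriv (deriv φ) t + c * deriv φ t + 1 * φ t * (1 - φ t - a * ψ t) = 0 :=
    fun t => by linear_combination hφode t
  have hb0 : 0 < b := by linarith
  have hφpos := pos_of_competition one_ne_zero hφreg hφode' hφmem hψmem fun h =>
    one_ne_zero <| tendsto_nhds_unique hφbot <| by rw [h]; exact tendsto_const_nhds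
  have hψpos := pos_of_competition hd.ne' hψreg hψode hψmem hφmem fun h =>
    one_ne_zero <| tendsto_nhds_unique hψtop <| by rw [h]; exact tendsto_const_nhds
  have hφlt := lt_one_of_competition one_pos one_pos ha0 hφreg hφode' (fun t => (hφmem t).2) hψpos
  have hψlt := lt_one_of_competition hd hr hb0 hψreg hψode (fun t => (hψmem t).2) hφpos
  obtain ⟨hφanti, hψmono⟩ := antitone_monotone_of_isLocalExtr ha0 ha1 hb hφreg.continuous
    hψreg.continuous hφbot hψbot hφtop hψtop (fun t => ⟨hφpos t, hφlt t⟩)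
    (fun t => ⟨hψpos t, hψlt t⟩)
    (fun _ => mul_le_one_sub_of_isLocalMax_of_competition one_pos one_pos hφreg hφode' hφpos)
    (fun _ => one_sub_le_mul_of_isLocalMin_of_competition one_pos one_pos hφreg hφode' hφpos)
    (fun _ => mul_le_one_sub_of_isLocalMax_of_competition hd hr hψreg hψode hψpos)
    (fun _ => one_sub_le_mul_of_isLocalMin_of_competition hd hr hψreg hψode hψpos)
  exact strictAnti_strictMono_of_competition ha0 ha1 hb one_ne_zero hr.ne' hφode' hψode hφpos
    hψpos hφanti hψmono

/-- Any traveling-wave profile `(φ, ψ)` of speed `c ≥ c_LLW` connecting `(1,0)`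
to `(0,1)` is componentwise strictly monotonic. -/
theorem profile_monotone
    (d r a b c : ℝ) (hd : 0 < d) (hr : 0 < r) (ha0 : 0 < a) (ha1 : a < 1) (hb : 1 < b)
    (hc : cLLW d r a b ≤ c)
    (φ ψ : ℝ → ℝ)
    (hφreg : ContDiff ℝ 2 φ) (hψreg : ContDiff ℝ 2 ψ)
    (hφmem : ∀ ξ, φ ξ ∈ Set.Icc (0:ℝ) 1) (hψmem : ∀ ξ, ψ ξ ∈ Set.Icc (0:ℝ) 1)
    (hφode : ∀ ξ, deriv (deriv φ) ξ + c * deriv φ ξ + φ ξ * (1 - φ ξ - a * ψ ξ) = 0)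
    (hψode : ∀ ξ, d * deriv (deriv ψ) ξ + c * deriv ψ ξ + r * ψ ξ * (1 - ψ ξ - b * φ ξ) = 0)
    (hφbot : Tendsto φ atBot (nhds 1)) (hψbot : Tendsto ψ atBot (nhds 0))
    (hφtop : Tendsto φ atTop (nhds 0)) (hψtop : Tendsto ψ atTop (nhds 1)) :
    StrictAnti φ ∧ StrictMono ψ :=
  profile_monotone_general d r a b c hd hr ha0 ha1 hb φ ψ hφreg hψreg hφmem hψmem hφode hψode hφbot
    hψbot hφtop hψtop
end
end

section
/- Let d > 0, r > 0 and a ∈ (0,1), and assume d ≤ 2 + r/(1−a). Then for every c ≥ 2√(1−a) one has (c + √(c² + 4rd))/(2d) ≥ (c − √(c² − 4(1−a)))/2; equivalently, writing λ₃(c) = (c − √(c² − 4(1−a)))/2, one has d·λ₃(c)² − c·λ₃(c) − r ≤ 0 for every c ≥ 2√(1−a). (In the proof one also uses that the supremum of λ₃(c)² over c ≥ 2√(1−a) equals 1 − a, attained at c = 2√(1−a).) -/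
open Real

lemma decay_aux (d r a : ℝ) (hd : 0 < d) (hr : 0 < r) (ha1 : a < 1)
    (hcond : d ≤ 2 + r / (1 - a)) (c : ℝ) (hc : 2 * Real.sqrt (1 - a) ≤ c) :
    ((c - Real.sqrt (c ^ 2 - 4 * (1 - a))) / 2) ^ 2 ≤ 1 - a ∧
    d * ((c - Real.sqrt (c ^ 2 - 4 * (1 - a))) / 2) ^ 2
        - c * ((c - Real.sqrt (c ^ 2 - 4 * (1 - a))) / 2) - r ≤ 0 ∧
      (c - Real.sqrt (c ^ 2 - 4 * (1 - a))) / 2 ≤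
        (c + Real.sqrt (c ^ 2 + 4 * r * d)) / (2 * d) := by
  have hb : 0 < 1 - a := by linarith
  have hsb : Real.sqrt (1 - a) ^ 2 = 1 - a := Real.sq_sqrt hb.le
  have hc0 : 0 ≤ c := le_trans (by positivity) hc
  have hs2 : 0 ≤ c ^ 2 - 4 * (1 - a) := by nlinarith [Real.sqrt_nonneg (1 - a)]
  set s := Real.sqrt (c ^ 2 - 4 * (1 - a)) with hs
  have hs0 : 0 ≤ s := Real.sqrt_nonneg _
  have hssq : s ^ 2 = c ^ 2 - 4 * (1 - a) := Real.sq_sqrt hs2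
  have hsc : s ≤ c := by nlinarith
  set l := (c - s) / 2 with hl
  have hl0 : 0 ≤ l := by simp only [hl]; linarith
  have hcl : c * l = l ^ 2 + (1 - a) := by
    have : s ^ 2 = c ^ 2 - 4 * (1 - a) := hssq
    field_simp [hl]; nlinarith
  have hlsq : l ^ 2 ≤ 1 - a := by nlinarith
  have hdb : (d - 2) * (1 - a) ≤ r := by
    have := (le_div_iff₀ hb).mp (by linarith : d - 2 ≤ r / (1 - a))
    linarith
  have hf : d * l ^ 2 - c * l - r ≤ 0 := by
    rw [hcl]
    rcases le_or_gt 1 d with h1 | h1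
    · nlinarith
    · nlinarith
  refine ⟨hlsq, hf, ?_⟩
  have ht2 : 0 ≤ c ^ 2 + 4 * r * d := by positivity
  set t := Real.sqrt (c ^ 2 + 4 * r * d) with ht
  have ht0 : 0 ≤ t := Real.sqrt_nonneg _
  have httsq : t ^ 2 = c ^ 2 + 4 * r * d := Real.sq_sqrt ht2
  have h1 : (2 * d * l - c) ^ 2 ≤ t ^ 2 := by nlinarith
  have h2 : 2 * d * l ≤ c + t := by nlinarith
  rw [div_le_div_iff₀ (by norm_num) (by positivity)]
  have hcs : (c - s) * (2 * d) = 2 * (2 * d * l) := by rw [hl]; ring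
  rw [hcs]; linarith

/-- If `d ≤ 2 + r/(1-a)`, then for every `c ≥ 2√(1-a)` one has
`(c + √(c² + 4rd))/(2d) ≥ λ₃(c) := (c - √(c² - 4(1-a)))/2`, equivalently
`dλ₃(c)² - cλ₃(c) - r ≤ 0`; moreover `sup λ₃(c)² = 1 - a`, attained at
`c = 2√(1-a)`. -/
theorem decay_ordering_condition
    (d r a : ℝ) (hd : 0 < d) (hr : 0 < r) (ha0 : 0 < a) (ha1 : a < 1)
    (hcond : d ≤ 2 + r / (1 - a)) :
    (∀ c, 2 * Real.sqrt (1 - a) ≤ c →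
      (c - Real.sqrt (c ^ 2 - 4 * (1 - a))) / 2 ≤
        (c + Real.sqrt (c ^ 2 + 4 * r * d)) / (2 * d) ∧
      d * ((c - Real.sqrt (c ^ 2 - 4 * (1 - a))) / 2) ^ 2
        - c * ((c - Real.sqrt (c ^ 2 - 4 * (1 - a))) / 2) - r ≤ 0) ∧
    (∀ c, 2 * Real.sqrt (1 - a) ≤ c →
      ((c - Real.sqrt (c ^ 2 - 4 * (1 - a))) / 2) ^ 2 ≤ 1 - a) ∧
    ((2 * Real.sqrt (1 - a)
      - Real.sqrt ((2 * Real.sqrt (1 - a)) ^ 2 - 4 * (1 - a))) / 2) ^ 2 = 1 - a := by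
  have hb : 0 < 1 - a := by linarith
  refine ⟨fun c hc => ⟨(decay_aux d r a hd hr ha1 hcond c hc).2.2,
      (decay_aux d r a hd hr ha1 hcond c hc).2.1⟩,
    fun c hc => (decay_aux d r a hd hr ha1 hcond c hc).1, ?_⟩
  have h0 : (2 * Real.sqrt (1 - a)) ^ 2 - 4 * (1 - a) = 0 := by
    have := Real.sq_sqrt hb.le
    nlinarith
  rw [h0, Real.sqrt_zero]
  have := Real.sq_sqrt hb.le
  nlinarith
end
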